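/- arXiv:2307.08395 — 6 statements merged into one kernel-verified Lean document; each statement's English description precedes it below -/
import Mathlib

section
/- Let j be a positive natural number. Define f : ℤ → ℝ by f(j−2n) = (∏_{k=1}^{n} (−1)/(−4kj+4k²−2k)) · √((2j)!·(2n)!/(2j−2n)!) for 0 ≤ n ≤ j, and f(m) = 0 for every other integer m (in particular when j−m is odd or |m| > j). Then for every integer m with −j ≤ m ≤ j one has √((m+j+1)(j−m)) · f(m+1) = √((m+j)(j−m+1)) · f(m−1). -/
/-!
The only nonzero components are `f (j - 2n)`, so for `j - m` even both sides vanish, and for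
`m = j - 2n - 1` the claim compares two consecutive coefficients. Writing `j = n + 1 + a`, passing
from `n` to `n + 1` multiplies the product by `1 / ((2a + 1)(2n + 2))` and the radicand by
`(2a + 2)(2n + 1) · (2a + 1)(2n + 2)`, which is exactly what the ratio of the two square-root
prefactors compensates.
-/

open Finset Real

noncomputable def capCoeff (j n : ℕ) : ℝ :=
  (∏ k ∈ Icc 1 n, (-1 : ℝ) / (-4 * k * j + 4 * (k : ℝ) ^ 2 - 2 * k)) *
    √(((2 * j).factorial * (2 * n).factorial : ℝ) / (2 * j - 2 * n).factorial)

lemma factorial_two_mul_succ (n : ℕ) :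
    ((2 * (n + 1)).factorial : ℝ) = (2 * n + 1) * (2 * n + 2) * (2 * n).factorial := by
  rw [mul_add_one, Nat.factorial_succ, Nat.factorial_succ]
  push_cast
  ring

lemma mul_factorial_div_factorial_step (x : ℝ) (n a : ℕ) :
    x * (2 * (n + 1)).factorial / (2 * a).factorial =
      x * (2 * n).factorial / (2 * (a + 1)).factorial *
        ((2 * a + 2) * (2 * n + 1)) * ((2 * a + 1) * (2 * n + 2)) := by
  rw [factorial_two_mul_succ, factorial_two_mul_succ]
  field_simp

lemma capCoeff_succ (n a : ℕ) :
    √((2 * a + 2) * (2 * n + 1)) * capCoeff (n + 1 + a) n =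
      √((2 * a + 1) * (2 * n + 2)) * capCoeff (n + 1 + a) (n + 1) := by
  have hfactor : (-1 : ℝ) / (-4 * ((n + 1 : ℕ) : ℝ) * ((n + 1 + a : ℕ) : ℝ)
      + 4 * ((n + 1 : ℕ) : ℝ) ^ 2 - 2 * ((n + 1 : ℕ) : ℝ)) = ((2 * a + 1) * (2 * n + 2) : ℝ)⁻¹ := by
    push_cast
    rw [div_eq_mul_inv, neg_one_mul, ← inv_neg]
    ring_nf
  have hlow : 2 * (n + 1 + a) - 2 * n = 2 * (a + 1) := by omega
  have hhigh : 2 * (n + 1 + a) - 2 * (n + 1) = 2 * a := by omega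
  have hb : (0 : ℝ) < (2 * a + 1) * (2 * n + 2) := by positivity
  have hc : (0 : ℝ) ≤ (2 * a + 2) * (2 * n + 1) := by positivity
  unfold capCoeff
  rw [prod_Icc_succ_top (by omega), hfactor, hlow, hhigh, mul_factorial_div_factorial_step,
    sqrt_mul' _ hb.le, sqrt_mul' _ hc]
  set b : ℝ := (2 * a + 1) * (2 * n + 2)
  set P := ∏ k ∈ Icc 1 n, (-1 : ℝ) / (-4 * k * (n + 1 + a : ℕ) + 4 * (k : ℝ) ^ 2 - 2 * k)
  set X : ℝ := (2 * (n + 1 + a)).factorial * (2 * n).factorial / (2 * (a + 1)).factorial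
  have hsq : √b * √b * b⁻¹ = 1 := by rw [mul_self_sqrt hb.le, mul_inv_cancel₀ hb.ne']
  linear_combination (-P * √X * √((2 * a + 2) * (2 * n + 1))) * hsq

theorem stmt_1_general (j : ℕ) (f : ℤ → ℝ)
    (hdef : ∀ n : ℕ, n ≤ j →
      f ((j : ℤ) - 2 * n) =
        (∏ k ∈ Finset.Icc 1 n, (-1 : ℝ) / (-4 * k * j + 4 * (k : ℝ) ^ 2 - 2 * k)) *
          Real.sqrt (((Nat.factorial (2 * j)) * (Nat.factorial (2 * n)) : ℝ) /
            (Nat.factorial (2 * j - 2 * n))))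
    (hzero : ∀ m : ℤ, (∀ n : ℕ, n ≤ j → m ≠ (j : ℤ) - 2 * n) → f m = 0) :
    ∀ m : ℤ, -(j : ℤ) ≤ m → m ≤ j →
      Real.sqrt (((m : ℝ) + j + 1) * ((j : ℝ) - m)) * f (m + 1) =
        Real.sqrt (((m : ℝ) + j) * ((j : ℝ) - m + 1)) * f (m - 1) := by
  have hcoeff : ∀ n ≤ j, f ((j : ℤ) - 2 * n) = capCoeff j n := hdef
  intro m hm_lower hm_upper
  obtain ⟨n, hparity | hparity⟩ := Int.even_or_odd' ((j : ℤ) - m)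
  · rw [hzero (m + 1) (by omega), hzero (m - 1) (by omega), mul_zero, mul_zero]
  lift n to ℕ using (by omega)
  obtain ⟨a, rfl⟩ : ∃ a, j = n + 1 + a := ⟨j - (n + 1), by omega⟩
  have hm : (m : ℝ) = (n + 1 + a : ℕ) - 2 * n - 1 := by
    rw [show m = ((n + 1 + a : ℕ) : ℤ) - 2 * n - 1 by omega]
    push_cast; ring
  rw [show m + 1 = ((n + 1 + a : ℕ) : ℤ) - 2 * (n : ℕ) by omega,
    show m - 1 = ((n + 1 + a : ℕ) : ℤ) - 2 * ((n + 1 : ℕ) : ℤ) by push_cast; omega,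
    hcoeff n (by omega), hcoeff (n + 1) (by omega), hm]
  convert capCoeff_succ n a using 3 <;> push_cast <;> ring

/-- The finite-dimensional Ishibashi cap state solves the cap-state condition
`(J₁ + J₋₁)|a⟩ = 0` in components. -/
theorem stmt_1 (j : ℕ) (hj : 0 < j) (f : ℤ → ℝ)
    (hdef : ∀ n : ℕ, n ≤ j →
      f ((j : ℤ) - 2 * n) =
        (∏ k ∈ Finset.Icc 1 n, (-1 : ℝ) / (-4 * k * j + 4 * (k : ℝ) ^ 2 - 2 * k)) *
          Real.sqrt (((Nat.factorial (2 * j)) * (Nat.factorial (2 * n)) : ℝ) /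
            (Nat.factorial (2 * j - 2 * n))))
    (hzero : ∀ m : ℤ, (∀ n : ℕ, n ≤ j → m ≠ (j : ℤ) - 2 * n) → f m = 0) :
    ∀ m : ℤ, -(j : ℤ) ≤ m → m ≤ j →
      Real.sqrt (((m : ℝ) + j + 1) * ((j : ℝ) - m)) * f (m + 1) =
        Real.sqrt (((m : ℝ) + j) * ((j : ℝ) - m + 1)) * f (m - 1) :=
  stmt_1_general j f hdef hzero
end

section
/- Let j ∈ ℂ with 2j ∉ ℤ and let n ∈ ℕ. Then ∏_{k=1}^{n} 1/(−4kj+4k²−2k) = [Γ(−2j)/(Γ(2n+1)·Γ(2n−2j))] · [Γ(j+1)/Γ(j−2n+1)] · ∑_{t=0}^{2n} ((−2n)_t (−j)_t / ((j−2n+1)_t · t!)) (−1)^t. -/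
/-!
Write `(x)⁽ᵐ⁾` for the falling factorial `x (x-1) ⋯ (x-m+1)`. Since
`(-2j)_{2n} = (-1)ⁿ 2ⁿ (j)⁽ⁿ⁾ ∏ₖ (2k-1-2j)`, the left side is `(-1)ⁿ (j)⁽ⁿ⁾ / (n! (-2j)_{2n})`,
while the Gamma quotients on the right are `1 / ((2n)! (-2j)_{2n})` and `(j)⁽²ⁿ⁾`. Multiplied by
`(j)⁽²ⁿ⁾`, the hypergeometric sum becomes `∑ₜ (-1)ᵗ C(2n,t) (j)⁽ᵗ⁾ (j)⁽²ⁿ⁻ᵗ⁾`, which equals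
`(-1)ⁿ (2n)!/n! (j)⁽ⁿ⁾`: at `j = M ∈ ℕ` it is `(2n)!` times the coefficient of `x²ⁿ` in
`(1-x)ᴹ (1+x)ᴹ = (1-x²)ᴹ`, and a polynomial identity valid at every natural number holds
identically.
-/

/-- Ascending Pochhammer symbol `(a)_k = a (a+1) ⋯ (a+k-1)`. -/
noncomputable def pochC (a : ℂ) (k : ℕ) : ℂ := ∏ i ∈ Finset.range k, (a + i)

open Finset Polynomial

theorem pochC_eq_ascPochhammer_eval (a : ℂ) (k : ℕ) :
    pochC a k = (ascPochhammer ℂ k).eval a := by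
  induction k with
  | zero => simp [pochC]
  | succ k ih => rw [pochC, prod_range_succ, ← pochC, ih, ascPochhammer_succ_eval]

theorem Polynomial.coeff_one_sub_X_pow {R : Type*} [CommRing R] (M k : ℕ) :
    ((1 - X : R[X]) ^ M).coeff k = (-1) ^ k * M.choose k := by
  have h : (1 - X : R[X]) ^ M = ((1 + X) ^ M).comp (C (-1) * X) := by simp [sub_eq_add_neg]
  rw [h, comp_C_mul_X_coeff, coeff_one_add_X_pow, mul_comm]

theorem sum_neg_one_pow_mul_choose_mul_choose {R : Type*} [CommRing R] (M n : ℕ) :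
    ∑ t ∈ range (2 * n + 1), (-1 : R) ^ t * M.choose t * M.choose (2 * n - t) =
      (-1) ^ n * M.choose n := by
  have h : (1 - X : R[X]) ^ M * (1 + X) ^ M = expand R 2 ((1 - X) ^ M) := by
    rw [← mul_pow, map_pow, map_sub, map_one, expand_X]; ring
  have h2n := congrArg (coeff · (2 * n)) h
  simp only [coeff_mul, Nat.sum_antidiagonal_eq_sum_range_succ_mk, coeff_one_sub_X_pow,
    coeff_one_add_X_pow] at h2n
  rw [h2n, mul_comm 2, coeff_expand_mul two_pos, coeff_one_sub_X_pow]

theorem Nat.descFactorial_two_mul_mul_factorial (n : ℕ) :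
    (2 * n).descFactorial n * n.factorial = (2 * n).factorial := by
  rw [mul_comm, ← factorial_mul_descFactorial (by omega : n ≤ 2 * n), two_mul, Nat.add_sub_cancel]

theorem sum_neg_one_pow_mul_choose_mul_descPochhammer (R : Type*) [CommRing R] (n : ℕ) :
    ∑ t ∈ range (2 * n + 1), (-1 : R[X]) ^ t * (2 * n).choose t *
        (descPochhammer R t * descPochhammer R (2 * n - t)) =
      (-1) ^ n * (2 * n).descFactorial n * descPochhammer R n := by
  suffices hℤ : ∑ t ∈ range (2 * n + 1), (-1 : ℤ[X]) ^ t * (2 * n).choose t *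
      (descPochhammer ℤ t * descPochhammer ℤ (2 * n - t)) =
        (-1) ^ n * (2 * n).descFactorial n * descPochhammer ℤ n by
    simpa [Polynomial.map_sum, descPochhammer_map] using congrArg (map (Int.castRingHom R)) hℤ
  refine eq_of_infinite_eval_eq _ _ ((Set.infinite_range_of_injective Nat.cast_injective).mono ?_)
  rintro _ ⟨M, rfl⟩
  simp only [Set.mem_ofPred_eq, eval_finsetSum, eval_mul, eval_pow, eval_neg, eval_one,
    eval_natCast, descPochhammer_eval_eq_descFactorial]
  have hterm : ∀ t ∈ range (2 * n + 1), (-1 : ℤ) ^ t * (2 * n).choose t *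
      (M.descFactorial t * M.descFactorial (2 * n - t)) =
        (2 * n).factorial * ((-1) ^ t * M.choose t * M.choose (2 * n - t)) := by
    intro t ht
    rw [Nat.descFactorial_eq_factorial_mul_choose, Nat.descFactorial_eq_factorial_mul_choose,
      ← Nat.choose_mul_factorial_mul_factorial (Nat.lt_succ_iff.mp (mem_range.mp ht))]
    push_cast; ring
  rw [sum_congr rfl hterm, ← mul_sum, sum_neg_one_pow_mul_choose_mul_choose,
    Nat.descFactorial_eq_factorial_mul_choose M n, ← Nat.descFactorial_two_mul_mul_factorial]
  push_cast; ring

theorem descPochhammer_eval_add {R : Type*} [CommRing R] (x : R) (s t : ℕ) :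
    (descPochhammer R (s + t)).eval x =
      (descPochhammer R s).eval x * (ascPochhammer R t).eval (x - (s + t : ℕ) + 1) := by
  rw [← descPochhammer_mul, eval_mul, eval_comp, eval_sub, eval_X, eval_natCast,
    descPochhammer_eval_eq_ascPochhammer R (x - s), Nat.cast_add, sub_sub]

theorem sum_pochC_mul_descPochhammer_eval (j : ℂ) (n : ℕ)
    (hj : (descPochhammer ℂ (2 * n)).eval j ≠ 0) :
    (∑ t ∈ range (2 * n + 1), pochC (-2 * (n : ℂ)) t * pochC (-j) t /
        (pochC (j - 2 * n + 1) t * (t.factorial : ℂ)) * (-1) ^ t) *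
        (descPochhammer ℂ (2 * n)).eval j =
      (-1) ^ n * (2 * n).descFactorial n * (descPochhammer ℂ n).eval j := by
  have h := congrArg (eval j) (sum_neg_one_pow_mul_choose_mul_descPochhammer ℂ n)
  simp only [eval_finsetSum, eval_mul, eval_pow, eval_neg, eval_one, eval_natCast] at h
  rw [← h, sum_mul]
  refine sum_congr rfl fun t ht => ?_
  have hsplit := descPochhammer_eval_add j (2 * n - t) t
  rw [Nat.sub_add_cancel (Nat.lt_succ_iff.mp (mem_range.mp ht))] at hsplit
  push_cast at hsplit
  have hA : (ascPochhammer ℂ t).eval (j - 2 * n + 1) ≠ 0 := right_ne_zero_of_mul (hsplit ▸ hj)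
  have hneg : -2 * (n : ℂ) = -((2 * n : ℕ) : ℂ) := by push_cast; ring
  rw [pochC_eq_ascPochhammer_eval, pochC_eq_ascPochhammer_eval, pochC_eq_ascPochhammer_eval, hneg,
    ascPochhammer_eval_neg_eq_descPochhammer, ascPochhammer_eval_neg_eq_descPochhammer,
    descPochhammer_eval_eq_descFactorial, Nat.descFactorial_eq_factorial_mul_choose, hsplit]
  push_cast
  have hfac : (t.factorial : ℂ) ≠ 0 := Nat.cast_ne_zero.mpr t.factorial_ne_zero
  have hsq : ((-1 : ℂ) ^ t) ^ 2 = 1 := by rw [← pow_mul, pow_mul', neg_one_sq, one_pow]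
  field_simp
  rw [hsq, one_mul]

theorem factorial_mul_ascPochhammer_eval_neg_two_mul {R : Type*} [CommRing R] (j : R) (n : ℕ) :
    (n.factorial : R) * (ascPochhammer R (2 * n)).eval (-2 * j) =
      (-1) ^ n * (descPochhammer R n).eval j *
        ∏ k ∈ Icc 1 n, (-4 * (k : R) * j + 4 * (k : R) ^ 2 - 2 * k) := by
  induction n with
  | zero => simp
  | succ n ih =>
    rw [prod_Icc_succ_top (by omega), show 2 * (n + 1) = 2 * n + 1 + 1 by ring,
      ascPochhammer_succ_eval, ascPochhammer_succ_eval, descPochhammer_succ_eval,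
      Nat.factorial_succ]
    push_cast
    linear_combination ((n + 1 : R) * (-2 * j + 2 * n) * (-2 * j + (2 * n + 1))) * ih

theorem ascPochhammer_eval_ne_zero {R : Type*} [CommRing R] [IsDomain R] {z : R}
    (hz : ∀ k : ℕ, z ≠ -k) (N : ℕ) : (ascPochhammer R N).eval z ≠ 0 := by
  rw [ne_eq, ascPochhammer_eval_eq_zero_iff]
  rintro ⟨k, -, hk⟩
  exact hz k (by rw [hk, neg_neg])

theorem Complex.Gamma_add_nat_eq_mul_ascPochhammer_eval (z : ℂ) (hz : ∀ k : ℕ, z ≠ -k) (N : ℕ) :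
    Gamma (z + N) = Gamma z * (ascPochhammer ℂ N).eval z := by
  rw [← Gamma_add_nat_div_Gamma_eq z hz, mul_div_cancel₀ _ (Gamma_ne_zero hz)]

theorem Complex.Gamma_add_one_div_Gamma_eq_descPochhammer_eval (x : ℂ) (N : ℕ)
    (hx : ∀ k : ℕ, x - N + 1 ≠ -k) :
    Gamma (x + 1) / Gamma (x - N + 1) = (descPochhammer ℂ N).eval x := by
  rw [descPochhammer_eval_eq_ascPochhammer, ← Gamma_add_nat_div_Gamma_eq _ hx]
  congr 2; ring

/-- Hypergeometric rewriting of the Ishibashi cap-state coefficients (eq. (B.4)). -/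
theorem stmt_3 (j : ℂ) (hj : ∀ m : ℤ, 2 * j ≠ (m : ℂ)) (n : ℕ) :
    ∏ k ∈ Finset.Icc 1 n, 1 / (-4 * (k : ℂ) * j + 4 * (k : ℂ) ^ 2 - 2 * k) =
      Complex.Gamma (-2 * j) /
          (Complex.Gamma (2 * n + 1) * Complex.Gamma (2 * (n : ℂ) - 2 * j)) *
        (Complex.Gamma (j + 1) / Complex.Gamma (j - 2 * n + 1)) *
        ∑ t ∈ Finset.range (2 * n + 1),
          pochC (-2 * (n : ℂ)) t * pochC (-j) t /
              (pochC (j - 2 * n + 1) t * (Nat.factorial t : ℂ)) * (-1) ^ t := by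
  have hneg_two_mul : ∀ k : ℕ, -2 * j ≠ -k := fun k h => hj k (by push_cast; linear_combination -h)
  have hshift : ∀ k : ℕ, j - (2 * n : ℕ) + 1 ≠ -k := fun k h =>
    hj (2 * (2 * n - 1 - k : ℤ)) (by push_cast at h ⊢; linear_combination 2 * h)
  have hA := ascPochhammer_eval_ne_zero hneg_two_mul (2 * n)
  have hD : (descPochhammer ℂ (2 * n)).eval j ≠ 0 := by
    rw [descPochhammer_eval_eq_ascPochhammer]; exact ascPochhammer_eval_ne_zero hshift _
  rw [eq_div_of_mul_eq hD (sum_pochC_mul_descPochhammer_eval j n hD),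
    show (2 * n + 1 : ℂ) = (2 * n : ℕ) + 1 by push_cast; ring, Complex.Gamma_nat_eq_factorial,
    show (2 * n - 2 * j : ℂ) = -2 * j + (2 * n : ℕ) by push_cast; ring,
    Complex.Gamma_add_nat_eq_mul_ascPochhammer_eval _ hneg_two_mul,
    show (j - 2 * n + 1 : ℂ) = j - (2 * n : ℕ) + 1 by push_cast; ring,
    Complex.Gamma_add_one_div_Gamma_eq_descPochhammer_eval _ _ hshift, prod_div_distrib,
    prod_const_one, mul_left_comm, div_mul_cancel_left₀ (Complex.Gamma_ne_zero hneg_two_mul)]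
  have hcap := factorial_mul_ascPochhammer_eval_neg_two_mul j n
  set P := ∏ k ∈ Icc 1 n, (-4 * (k : ℂ) * j + 4 * (k : ℂ) ^ 2 - 2 * k)
  set A := (ascPochhammer ℂ (2 * n)).eval (-2 * j)
  have hP : P ≠ 0 := fun h => hA (by simpa [h, Nat.factorial_ne_zero] using hcap)
  have hfac : ((2 * n).descFactorial n : ℂ) * n.factorial = (2 * n).factorial := by
    exact_mod_cast Nat.descFactorial_two_mul_mul_factorial n
  have h2nfac : ((2 * n).factorial : ℂ) ≠ 0 := Nat.cast_ne_zero.mpr (Nat.factorial_ne_zero _)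
  field_simp
  linear_combination ((2 * n).descFactorial n : ℂ) * hcap - A * hfac
end

section
/- Let N ≥ 2, let a₁, a₂ and b₁,…,b_{N−1} and c₁,…,c_N be negative integers satisfying a₁ > c₁, b_i > c_i and b_i > c_{i+1} for 1 ≤ i ≤ N−1, and a₂ > c_N. Let z₁,…,z_N ∈ ℂ with z₁ ≠ 1. Then F_N[a₁, b₁,…,b_{N−1}, a₂; c₁,…,c_N; z₁,…,z_N] = (1−z₁)^{−b₁} · F_N[c₁−a₁, b₁,…,b_{N−1}, a₂; c₁,…,c_N; z₁/(z₁−1), −z₂/(z₁−1), z₃,…,z_N]. -/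
/-- The comb function
`F_N[a₁, b₁, …, b_{N-1}, a₂; c₁, …, c_N; z₁, …, z_N]`
(summed over all `(m₁, …, m_N) ∈ ℕ^N`; for negative-integer parameters satisfying the
triangle-type inequalities the numerator Pochhammer symbols vanish outside a finite
domain, so the sum is finitely supported). -/
noncomputable def combF (N : ℕ) (a₁ a₂ : ℂ) (b c z : ℕ → ℂ) : ℂ :=
  ∑' m : Fin N → ℕ,
    (fun M : ℕ → ℕ =>
      pochC a₁ (M 1) * (∏ i ∈ Finset.Icc 1 (N - 1), pochC (b i) (M i + M (i + 1))) *
          pochC a₂ (M N) / (∏ i ∈ Finset.Icc 1 N, pochC (c i) (M i)) *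
        ∏ i ∈ Finset.Icc 1 N, z i ^ M i / (Nat.factorial (M i) : ℂ))
      (fun i => if h : i - 1 < N then m ⟨i - 1, h⟩ else 0)

open Finset Polynomial

theorem neg_div_sub_one {K : Type*} [DivisionRing K] (w z : K) : -w / (z - 1) = w / (1 - z) := by
  rw [← neg_sub 1 z, neg_div_neg_eq]

theorem Summable.tsum_eq_tsum_tsum_cons {α β : Type*} [AddCommGroup α] [UniformSpace α]
    [IsUniformAddGroup α] [CompleteSpace α] [T0Space α] {n : ℕ} {f : (Fin (n + 1) → β) → α}
    (hf : Summable f) : ∑' x, f x = ∑' t : Fin n → β, ∑' a : β, f (Fin.cons a t) := by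
  let e := Fin.consEquiv fun _ : Fin (n + 1) => β
  have hfe : Summable (Function.uncurry fun a t => f (e (a, t))) := e.summable_iff.2 hf
  calc ∑' x, f x = ∑' p, f (e p) := (e.tsum_eq f).symm
    _ = ∑' a, ∑' t, f (e (a, t)) := hfe.tsum_prod
    _ = ∑' t, ∑' a, f (Fin.cons a t) := hfe.tsum_comm.symm

theorem pochC_add (a : ℂ) (j k : ℕ) : pochC a (j + k) = pochC a j * pochC (a + j) k := by
  simp [pochC_eq_ascPochhammer_eval, ← ascPochhammer_mul, eval_comp]

theorem pochC_ne_zero_of_le {c : ℂ} {k n : ℕ} (h : pochC c n ≠ 0) (hk : k ≤ n) :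
    pochC c k ≠ 0 := by
  rw [← Nat.add_sub_cancel' hk, pochC_add] at h
  exact left_ne_zero_of_mul h

theorem pochC_intCast_ne_zero {c : ℤ} {k : ℕ} (h : c + k ≤ 0) : pochC (c : ℂ) k ≠ 0 := by
  rw [pochC, prod_ne_zero_iff]
  intro i hi
  exact_mod_cast (show c + i ≠ 0 by have := mem_range.1 hi; omega)

theorem pochC_neg_natCast (p k : ℕ) : pochC (-p) k = (-1) ^ k * p.descFactorial k := by
  rw [pochC_eq_ascPochhammer_eval, ascPochhammer_eval_neg_eq_descPochhammer,
    descPochhammer_eval_eq_descFactorial]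

theorem pochC_neg_natCast_eq_zero {p k : ℕ} (h : p < k) : pochC (-p) k = 0 := by
  simp [pochC_neg_natCast, Nat.descFactorial_eq_zero_iff_lt.2 h]

theorem pochC_neg_natCast_div_factorial (p k : ℕ) :
    pochC (-p) k / k.factorial = (-1) ^ k * p.choose k := by
  rw [pochC_neg_natCast, Nat.descFactorial_eq_factorial_mul_choose]
  push_cast
  field_simp [Nat.factorial_ne_zero]

theorem smeval_descPochhammer_eq_pochC (x : ℂ) (k : ℕ) :
    (descPochhammer ℤ k).smeval x = pochC (x - k + 1) k := by
  rw [descPochhammer_smeval_eq_ascPochhammer, ascPochhammer_smeval_eq_eval,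
    pochC_eq_ascPochhammer_eval]

theorem pochC_neg_sub_add_one (a : ℂ) (k : ℕ) : pochC (-a - k + 1) k = (-1) ^ k * pochC a k := by
  rw [pochC_eq_ascPochhammer_eval, pochC_eq_ascPochhammer_eval,
    ← descPochhammer_eval_eq_ascPochhammer, ← neg_neg a, ascPochhammer_eval_neg_eq_descPochhammer,
    neg_neg, ← mul_assoc, ← mul_pow]
  simp

/-- Chu–Vandermonde, obtained from the falling-factorial form
`Ring.descPochhammer_smeval_add` at `r = -d`, `s = c + m - 1`. -/
theorem sum_choose_mul_pochC_eq_pochC_sub (c d : ℂ) (m : ℕ) :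
    ∑ k ∈ range (m + 1), (m.choose k : ℂ) * ((-1) ^ k * pochC d k) * pochC (c + k) (m - k) =
      pochC (c - d) m := by
  have vandermonde := Ring.descPochhammer_smeval_add (R := ℂ) m (Commute.all (-d) (c + m - 1))
  rw [Nat.sum_antidiagonal_eq_sum_range_succ_mk] at vandermonde
  simp only [smeval_descPochhammer_eq_pochC, pochC_neg_sub_add_one] at vandermonde
  convert vandermonde.symm using 1
  · refine sum_congr rfl fun k hk => ?_
    rw [Nat.cast_sub (by simpa [Nat.lt_succ_iff] using hk)]
    ring_nf
  · ring_nf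

theorem sum_choose_mul_pochC_div_eq (a c : ℂ) {m : ℕ} (hc : pochC c m ≠ 0) :
    ∑ k ∈ range (m + 1), (m.choose k : ℂ) * ((-1) ^ k * pochC (c - a) k / pochC c k) =
      pochC a m / pochC c m := by
  have chu := sum_choose_mul_pochC_eq_pochC_sub c (c - a) m
  rw [sub_sub_cancel] at chu
  rw [eq_div_iff hc, sum_mul, ← chu]
  refine sum_congr rfl fun k hk => ?_
  have hkm : k ≤ m := by simpa [Nat.lt_succ_iff] using hk
  have hcm : pochC c m = pochC c k * pochC (c + k) (m - k) := by
    rw [← pochC_add, Nat.add_sub_cancel' hkm]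
  rw [hcm]
  field_simp [pochC_ne_zero_of_le hc hkm]

theorem sum_choose_mul_pochC_div_mul_one_sub_pow (a c z : ℂ) {p : ℕ} (hc : pochC c p ≠ 0) :
    ∑ k ∈ range (p + 1),
        (p.choose k : ℂ) * (pochC (c - a) k / pochC c k) * z ^ k * (1 - z) ^ (p - k) =
      ∑ m ∈ range (p + 1), (p.choose m : ℂ) * (pochC a m / pochC c m) * (-z) ^ m := by
  set G : ℕ → ℕ → ℂ := fun k j =>
    (p.choose k : ℂ) * (pochC (c - a) k / pochC c k) * z ^ k * ((-z) ^ j * ((p - k).choose j : ℂ))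
  have expand : ∀ k ∈ range (p + 1), (p.choose k : ℂ) * (pochC (c - a) k / pochC c k) * z ^ k *
      (1 - z) ^ (p - k) = ∑ j ∈ range (p + 1 - k), G k j := by
    intro k hk
    rw [show (1 : ℂ) - z = -z + 1 by ring, add_pow, mul_sum,
      ← Nat.sub_add_comm (by simpa [Nat.lt_succ_iff] using hk)]
    simp [G]
  rw [sum_congr rfl expand, ← sum_range_diag_flip]
  refine sum_congr rfl fun m hm => ?_
  have hmp : m ≤ p := by simpa [Nat.lt_succ_iff] using hm
  have diag : ∀ k ∈ range (m + 1), G k (m - k) = (p.choose m : ℂ) * (-z) ^ m *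
      ((m.choose k : ℂ) * ((-1) ^ k * pochC (c - a) k / pochC c k)) := by
    intro k hk
    have hkm : k ≤ m := by simpa [Nat.lt_succ_iff] using hk
    have hchoose : (p.choose k : ℂ) * ((p - k).choose (m - k) : ℂ) = p.choose m * m.choose k := by
      exact_mod_cast (Nat.choose_mul (n := p) hkm).symm
    have hpow : z ^ k * (-z) ^ (m - k) = (-z) ^ m * (-1) ^ k := by
      obtain ⟨l, rfl⟩ := Nat.exists_eq_add_of_le hkm
      rw [Nat.add_sub_cancel_left, pow_add, neg_pow z k]
      ring_nf
      simp
    simp only [G]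
    linear_combination (pochC (c - a) k / pochC c k) *
      ((-z) ^ (m - k) * z ^ k * hchoose + (m.choose k : ℂ) * p.choose m * hpow)
  rw [sum_congr rfl diag, ← mul_sum, sum_choose_mul_pochC_div_eq a c (pochC_ne_zero_of_le hc hmp)]
  ring

theorem pochC_mul_pochC_neg_div (a c z : ℂ) (p k : ℕ) :
    pochC a k * pochC (-p) k / pochC c k * z ^ k / k.factorial =
      (p.choose k : ℂ) * (pochC a k / pochC c k) * (-z) ^ k := by
  calc pochC a k * pochC (-p) k / pochC c k * z ^ k / k.factorial
      = pochC a k / pochC c k * z ^ k * (pochC (-p) k / k.factorial) := by ring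
    _ = _ := by rw [pochC_neg_natCast_div_factorial, neg_pow]; ring

theorem pfaff_terminating (a c z : ℂ) {p : ℕ} (hc : pochC c p ≠ 0) (hz : z ≠ 1) :
    ∑ k ∈ range (p + 1), pochC a k * pochC (-p) k / pochC c k * z ^ k / k.factorial =
      (1 - z) ^ p * ∑ k ∈ range (p + 1),
        pochC (c - a) k * pochC (-p) k / pochC c k * (z / (z - 1)) ^ k / k.factorial := by
  have hz' : 1 - z ≠ 0 := sub_ne_zero.2 hz.symm
  simp only [pochC_mul_pochC_neg_div, ← sum_choose_mul_pochC_div_mul_one_sub_pow a c z hc, mul_sum]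
  refine sum_congr rfl fun k hk => ?_
  have hkp : k ≤ p := by simpa [Nat.lt_succ_iff] using hk
  rw [← neg_div, neg_div_sub_one, div_pow, ← Nat.sub_add_cancel hkp, pow_add, Nat.add_sub_cancel]
  field_simp

theorem pfaff_shifted (a c z w : ℂ) (q μ : ℕ) (hc : pochC c q ≠ 0) (hz : z ≠ 1) :
    (∑' j, pochC a j * pochC (-q) (j + μ) / pochC c j * z ^ j / j.factorial) * w ^ μ =
      (1 - z) ^ q * ((∑' j, pochC (c - a) j * pochC (-q) (j + μ) / pochC c j *
        (z / (z - 1)) ^ j / j.factorial) * (-w / (z - 1)) ^ μ) := by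
  rcases lt_or_ge q μ with hμ | hμ
  · have hzero : ∀ j, pochC (-q) (j + μ) = 0 := fun j => pochC_neg_natCast_eq_zero (by omega)
    simp [hzero]
  obtain ⟨p, rfl⟩ := Nat.exists_eq_add_of_le' hμ
  have hsplit : ∀ j, pochC (-(p + μ : ℕ)) (j + μ) = pochC (-(p + μ : ℕ)) μ * pochC (-p) j := by
    intro j
    rw [add_comm j μ, pochC_add]
    push_cast
    ring_nf
  have htsum : ∀ x y : ℂ, ∑' j, pochC x j * pochC (-(p + μ : ℕ)) (j + μ) / pochC c j * y ^ j /
      j.factorial = pochC (-(p + μ : ℕ)) μ *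
        ∑ j ∈ range (p + 1), pochC x j * pochC (-p) j / pochC c j * y ^ j / j.factorial := by
    intro x y
    rw [mul_sum, tsum_eq_sum (s := range (p + 1))]
    · exact sum_congr rfl fun j _ => by rw [hsplit]; ring
    · intro j hj
      rw [hsplit, pochC_neg_natCast_eq_zero (k := j) (by simpa using hj)]
      simp
  have h1z : 1 - z ≠ 0 := sub_ne_zero.2 hz.symm
  rw [htsum, htsum, pfaff_terminating a c z (pochC_ne_zero_of_le hc (by omega)) hz,
    neg_div_sub_one, div_pow, pow_add]
  field_simp

/-- The indexing of `combF`: the paper's `mᵢ` is `M i`; position `0` repeats `m₁` (junk, never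
read). -/
def combIndex (N : ℕ) (m : Fin N → ℕ) (i : ℕ) : ℕ := if h : i - 1 < N then m ⟨i - 1, h⟩ else 0

noncomputable def combTerm (N : ℕ) (a₁ a₂ : ℂ) (b c z : ℕ → ℂ) (M : ℕ → ℕ) : ℂ :=
  pochC a₁ (M 1) * (∏ i ∈ Icc 1 (N - 1), pochC (b i) (M i + M (i + 1))) * pochC a₂ (M N) /
    (∏ i ∈ Icc 1 N, pochC (c i) (M i)) * ∏ i ∈ Icc 1 N, z i ^ M i / (M i).factorial

noncomputable def combTail (n : ℕ) (a₂ : ℂ) (b c z : ℕ → ℂ) (M : ℕ → ℕ) : ℂ :=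
  (∏ i ∈ Icc 2 n, pochC (b i) (M i + M (i + 1))) * pochC a₂ (M (n + 1)) /
    (∏ i ∈ Icc 2 (n + 1), pochC (c i) (M i)) * ∏ i ∈ Icc 3 (n + 1), z i ^ M i / (M i).factorial

theorem combF_eq_tsum (N : ℕ) (a₁ a₂ : ℂ) (b c z : ℕ → ℂ) :
    combF N a₁ a₂ b c z = ∑' m, combTerm N a₁ a₂ b c z (combIndex N m) := rfl

theorem combIndex_succ {N : ℕ} (m : Fin N → ℕ) (i : Fin N) : combIndex N m (i + 1) = m i := by
  simp [combIndex]

theorem combIndex_cons_one {n : ℕ} (j : ℕ) (m : Fin n → ℕ) :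
    combIndex (n + 1) (Fin.cons j m) 1 = j := by
  simp [combIndex]

theorem combIndex_cons_of_two_le {n : ℕ} (j j' : ℕ) (m : Fin n → ℕ) {i : ℕ} (hi : 2 ≤ i) :
    combIndex (n + 1) (Fin.cons j m) i = combIndex (n + 1) (Fin.cons j' m) i := by
  obtain ⟨k, rfl⟩ := Nat.exists_eq_add_of_le' hi
  simp only [combIndex, show k + 2 - 1 = k + 1 by omega]
  split_ifs with h
  · exact (Fin.cons_succ (α := fun _ => ℕ) j m ⟨k, by omega⟩).trans
      (Fin.cons_succ (α := fun _ => ℕ) j' m ⟨k, by omega⟩).symm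
  · rfl

theorem combTerm_eq_zero {n : ℕ} (a₁ a₂ : ℂ) (b c z : ℕ → ℂ) {M : ℕ → ℕ} {i : ℕ}
    (hi : 1 ≤ i) (hin : i ≤ n) (hb : pochC (b i) (M i + M (i + 1)) = 0) :
    combTerm (n + 1) a₁ a₂ b c z M = 0 := by
  have : ∏ i ∈ Icc 1 (n + 1 - 1), pochC (b i) (M i + M (i + 1)) = 0 :=
    prod_eq_zero (mem_Icc.2 ⟨hi, by omega⟩) hb
  rw [combTerm, this, mul_zero, zero_mul, zero_div, zero_mul]

/-- The coordinate `m i` (0-based) occurs in the factor `(b_{max i 1})_{…}`, which vanishes once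
`m i > p (max i 1)`. -/
theorem summable_combTerm {n : ℕ} (hn : 1 ≤ n) (a₁ a₂ : ℂ) (b c z : ℕ → ℂ) (p : ℕ → ℕ)
    (hb : ∀ i, 1 ≤ i → i ≤ n → b i = -(p i)) :
    Summable fun m => combTerm (n + 1) a₁ a₂ b c z (combIndex (n + 1) m) := by
  refine summable_of_ne_finset_zero
    (s := Fintype.piFinset fun i : Fin (n + 1) => range (p (max i 1) + 1)) fun m hm => ?_
  obtain ⟨i, hi⟩ : ∃ i : Fin (n + 1), p (max (i : ℕ) 1) < m i := by
    simpa [Fintype.mem_piFinset] using hm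
  refine combTerm_eq_zero a₁ a₂ b c z (i := max i 1) (by omega) (by omega) ?_
  rw [hb _ (by omega) (by omega)]
  refine pochC_neg_natCast_eq_zero (lt_of_lt_of_le hi ?_)
  rcases Nat.eq_zero_or_pos (i : ℕ) with h0 | hpos
  · have : combIndex (n + 1) m 1 = m i := by rw [← combIndex_succ m i, h0]
    simp [h0, this]
  · simp [show max (i : ℕ) 1 = i by omega, combIndex_succ m i]

theorem combTerm_succ {n : ℕ} (hn : 1 ≤ n) (a₁ a₂ : ℂ) (b c z : ℕ → ℂ) (M : ℕ → ℕ) :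
    combTerm (n + 1) a₁ a₂ b c z M =
      pochC a₁ (M 1) * pochC (b 1) (M 1 + M 2) / pochC (c 1) (M 1) * z 1 ^ M 1 /
        (M 1).factorial * (z 2 ^ M 2 / (M 2).factorial * combTail n a₂ b c z M) := by
  have h₁ : Icc 1 n = insert 1 (Icc 2 n) := (insert_Icc_add_one_left_eq_Icc hn).symm
  have h₂ : Icc 1 (n + 1) = insert 1 (Icc 2 (n + 1)) :=
    (insert_Icc_add_one_left_eq_Icc (by omega)).symm
  have h₃ : Icc 2 (n + 1) = insert 2 (Icc 3 (n + 1)) :=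
    (insert_Icc_add_one_left_eq_Icc (by omega)).symm
  rw [combTerm, combTail, Nat.add_sub_cancel, h₁, h₂, prod_insert (by simp), prod_insert (by simp),
    prod_insert (by simp), h₃, prod_insert (by simp), prod_insert (by simp)]
  ring

theorem combTail_congr {n : ℕ} (hn : 1 ≤ n) (a₂ : ℂ) (b c : ℕ → ℂ) {z z' : ℕ → ℂ}
    {M M' : ℕ → ℕ} (hM : ∀ i, 2 ≤ i → M i = M' i) (hz : ∀ i, 3 ≤ i → z i = z' i) :
    combTail n a₂ b c z M = combTail n a₂ b c z' M' := by
  have hb : ∏ i ∈ Icc 2 n, pochC (b i) (M i + M (i + 1)) =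
      ∏ i ∈ Icc 2 n, pochC (b i) (M' i + M' (i + 1)) :=
    prod_congr rfl fun i hi => by rw [hM i (mem_Icc.1 hi).1, hM (i + 1) (by grind)]
  have hc : ∏ i ∈ Icc 2 (n + 1), pochC (c i) (M i) = ∏ i ∈ Icc 2 (n + 1), pochC (c i) (M' i) :=
    prod_congr rfl fun i hi => by rw [hM i (mem_Icc.1 hi).1]
  have hz : ∏ i ∈ Icc 3 (n + 1), z i ^ M i / (M i).factorial =
      ∏ i ∈ Icc 3 (n + 1), z' i ^ M' i / (M' i).factorial :=
    prod_congr rfl fun i hi => by rw [hM i (by grind), hz i (mem_Icc.1 hi).1]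
  rw [combTail, combTail, hb, hc, hz, hM (n + 1) (by omega)]

theorem tsum_combTerm_cons_pfaff {n : ℕ} (hn : 1 ≤ n) (a₁ a₂ : ℂ) (b c z z' : ℕ → ℂ) {q : ℕ}
    (hb : b 1 = -q) (hc : pochC (c 1) q ≠ 0) (hz : z 1 ≠ 1) (hz₁ : z' 1 = z 1 / (z 1 - 1))
    (hz₂ : z' 2 = -z 2 / (z 1 - 1)) (hz' : ∀ i, 3 ≤ i → z i = z' i) (m : Fin n → ℕ) :
    ∑' j, combTerm (n + 1) a₁ a₂ b c z (combIndex (n + 1) (Fin.cons j m)) =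
      (1 - z 1) ^ q *
        ∑' j, combTerm (n + 1) (c 1 - a₁) a₂ b c z' (combIndex (n + 1) (Fin.cons j m)) := by
  set M₀ := combIndex (n + 1) (Fin.cons 0 m)
  set T := combTail n a₂ b c z M₀
  have factor : ∀ (α : ℂ) (y : ℕ → ℂ), (∀ i, 3 ≤ i → z i = y i) → ∀ j,
      combTerm (n + 1) α a₂ b c y (combIndex (n + 1) (Fin.cons j m)) =
        pochC α j * pochC (-q) (j + M₀ 2) / pochC (c 1) j * y 1 ^ j / j.factorial *
          (y 2 ^ M₀ 2 / (M₀ 2).factorial * T) := by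
    intro α y hy j
    rw [combTerm_succ hn, combIndex_cons_one, combIndex_cons_of_two_le j 0 m le_rfl, hb,
      ← combTail_congr hn a₂ b c (M := M₀) (fun i hi => combIndex_cons_of_two_le 0 j m hi) hy]
  rw [tsum_congr (factor a₁ z fun _ _ => rfl), tsum_congr (factor _ z' hz'), tsum_mul_right,
    tsum_mul_right, hz₁, hz₂]
  linear_combination (T / (M₀ 2).factorial) * pfaff_shifted a₁ (c 1) (z 1) (z 2) q (M₀ 2) hc hz

theorem stmt_10_general (N : ℕ) (hN : 2 ≤ N) (a₁ a₂ : ℤ) (b c : ℕ → ℤ)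
    (hb : ∀ i, 1 ≤ i → i ≤ N - 1 → b i < 0)
    (h2 : ∀ i, 1 ≤ i → i ≤ N - 1 → c i < b i ∧ c (i + 1) < b i)
    (z : ℕ → ℂ) (hz : z 1 ≠ 1) :
    combF N (a₁ : ℂ) (a₂ : ℂ) (fun i => (b i : ℂ)) (fun i => (c i : ℂ)) z =
      (1 - z 1) ^ (-b 1) *
        combF N ((c 1 - a₁ : ℤ) : ℂ) (a₂ : ℂ) (fun i => (b i : ℂ)) (fun i => (c i : ℂ))
          (fun i => if i = 1 then z 1 / (z 1 - 1)
            else if i = 2 then -z 2 / (z 1 - 1) else z i) := by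
  obtain ⟨n, rfl⟩ : ∃ n, N = n + 1 := ⟨N - 1, by omega⟩
  have hn : 1 ≤ n := by omega
  have hbp : ∀ i, 1 ≤ i → i ≤ n → ((b i : ℤ) : ℂ) = -(((-b i).toNat : ℕ) : ℂ) := by
    intro i hi hin
    have hbi : ((-b i).toNat : ℤ) = -b i := Int.toNat_of_nonneg (by linarith [hb i hi (by omega)])
    rw [← Int.cast_natCast, hbi, Int.cast_neg, neg_neg]
  obtain ⟨q, hq⟩ := Int.exists_eq_neg_ofNat (hb 1 le_rfl (by omega)).le
  have hc : pochC (c 1 : ℂ) q ≠ 0 :=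
    pochC_intCast_ne_zero (by linarith [(h2 1 le_rfl (by omega)).1])
  rw [combF_eq_tsum, combF_eq_tsum, (summable_combTerm hn _ _ _ _ _ _ hbp).tsum_eq_tsum_tsum_cons,
    (summable_combTerm hn _ _ _ _ _ _ hbp).tsum_eq_tsum_tsum_cons, ← tsum_mul_left, hq, neg_neg,
    zpow_natCast, Int.cast_sub]
  refine tsum_congr fun m => tsum_combTerm_cons_pfaff hn _ _ _ _ _ _ (by simp [hq]) hc hz
    (by simp) (by simp) (fun i hi => ?_) m
  simp [show i ≠ 1 by omega, show i ≠ 2 by omega]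

/-- Pfaff-type transformation of the comb function (eq. (A.17)). -/
theorem stmt_10 (N : ℕ) (hN : 2 ≤ N) (a₁ a₂ : ℤ) (b c : ℕ → ℤ)
    (ha₁ : a₁ < 0) (ha₂ : a₂ < 0)
    (hb : ∀ i, 1 ≤ i → i ≤ N - 1 → b i < 0) (hc : ∀ i, 1 ≤ i → i ≤ N → c i < 0)
    (h1 : c 1 < a₁)
    (h2 : ∀ i, 1 ≤ i → i ≤ N - 1 → c i < b i ∧ c (i + 1) < b i)
    (h3 : c N < a₂)
    (z : ℕ → ℂ) (hz : z 1 ≠ 1) :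
    combF N (a₁ : ℂ) (a₂ : ℂ) (fun i => (b i : ℂ)) (fun i => (c i : ℂ)) z =
      (1 - z 1) ^ (-b 1) *
        combF N ((c 1 - a₁ : ℤ) : ℂ) (a₂ : ℂ) (fun i => (b i : ℂ)) (fun i => (c i : ℂ))
          (fun i => if i = 1 then z 1 / (z 1 - 1)
            else if i = 2 then -z 2 / (z 1 - 1) else z i) :=
  stmt_10_general N hN a₁ a₂ b c hb h2 z hz
end

section
/- For every j ∈ ℕ and every real q > 0, setting s := (q·√(4+q²) + 2 + q²)/2, one has s^j · ∑_{k=0}^{j} ((−j)_k (1/2)_k / ((1/2−j)_k · k!)) · s^{−2k} = q^{2j} · ∑_{k=0}^{j} ((−j)_k (−j)_k / ((−2j)_k · k!)) · (−4/q²)^k. -/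
/-- Ascending Pochhammer symbol `(a)_k = a (a+1) ⋯ (a+k-1)` over `ℝ`. -/
noncomputable def pochR (a : ℝ) (k : ℕ) : ℝ := ∏ i ∈ Finset.range k, (a + i)

/-!
Multiplied by `C(2j, j) s^j`, the `k`-th terms of the two sums become
`C(2k, k) C(2(j-k), j-k) s^(2(j-k))` and, with `m = j - k` and `q²s = (1 - s)²`,
`C(2m, m) C(j+m, 2m) (1 - s)^(2m) (4s)^(j-m)`. Both sums are the coefficient of `x^j` in
`((1 - 4x)(1 - 4s²x))^(-1/2)`. The first expands it as the product of the series
`F(αx) = ∑ C(2n, n) (αx)^n = (1 - 4αx)^(-1/2)` for `α = 1, s²`. The second uses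
`(1 - 4x)(1 - 4s²x) = (1 - 4sx)² - 4(1 - s)²x` and expands around `(1 - 4sx)⁻¹`:
it is `D · F(Z)` with `D = (1 - 4sx)⁻¹` and `Z = (1 - s)² x D²`. Both power series have
constant term `1` and square to the inverse of the same quadratic, so they are equal.
That `F² (1 - 4x) = 1` follows from the differential equation `(1 - 4x) F' = 2F`.
-/

open Finset PowerSeries

namespace PowerSeries

variable {R : Type*} [CommRing R]

theorem coeff_pow_eq_zero_of_lt {Z : R⟦X⟧} (hZ : constantCoeff Z = 0) {d n : ℕ} (h : n < d) :
    coeff n (Z ^ d) = 0 := by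
  obtain ⟨W, rfl⟩ := X_dvd_iff.mpr hZ
  rw [mul_pow, coeff_X_pow_mul', if_neg h.not_ge]

theorem coeff_subst_eq_sum {Z : R⟦X⟧} (hZ : constantCoeff Z = 0) (f : R⟦X⟧) {n N : ℕ}
    (hn : n ≤ N) :
    coeff n (f.subst Z) = ∑ d ∈ range (N + 1), coeff d f * coeff n (Z ^ d) := by
  rw [coeff_subst' (HasSubst.of_constantCoeff_zero' hZ)]
  refine finsum_eq_sum_of_support_subset _ fun d hd => ?_
  rw [Function.mem_support] at hd
  by_contra hdN
  simp only [coe_range, Set.mem_Iio, not_lt] at hdN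
  exact hd (by rw [coeff_pow_eq_zero_of_lt hZ (by omega), smul_zero])

theorem coeff_mul_subst {Z : R⟦X⟧} (hZ : constantCoeff Z = 0) (f g : R⟦X⟧) (n : ℕ) :
    coeff n (g * f.subst Z) = ∑ d ∈ range (n + 1), coeff d f * coeff n (g * Z ^ d) := by
  simp_rw [coeff_mul _ g, mul_sum]
  calc ∑ p ∈ antidiagonal n, coeff p.1 g * coeff p.2 (f.subst Z)
      = ∑ p ∈ antidiagonal n, ∑ d ∈ range (n + 1),
          coeff d f * (coeff p.1 g * coeff p.2 (Z ^ d)) :=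
        sum_congr rfl fun p hp => by
          rw [coeff_subst_eq_sum hZ f (HasAntidiagonal.antidiagonal.snd_le hp), mul_sum]
          exact sum_congr rfl fun d _ => by ring
    _ = _ := sum_comm

theorem coeff_rescale_mk_one_mul_pow (c u : R) {m n : ℕ} (hm : m ≤ n) :
    coeff n (rescale c (mk 1) * (C u * X * rescale c (mk 1) ^ 2) ^ m) =
      u ^ m * (n + m).choose (2 * m) * c ^ (n - m) := by
  have h : rescale c (mk 1) * (C u * X * rescale c (mk 1) ^ 2) ^ m =
      C (u ^ m) * (X ^ m * rescale c ((mk 1 : R⟦X⟧) ^ (2 * m + 1))) := by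
    rw [map_pow, map_pow]; ring
  rw [h, coeff_C_mul, coeff_X_pow_mul', if_pos hm, mk_one_pow_eq_mk_choose_add, coeff_rescale,
    coeff_mk, show 2 * m + (n - m) = n + m by omega]
  ring

theorem eq_of_sq_mul_eq_one [IsDomain R] [NeZero (2 : R)] {P Q E : R⟦X⟧} (hP : P ^ 2 * E = 1)
    (hQ : Q ^ 2 * E = 1) (h0 : constantCoeff P = constantCoeff Q) : P = Q := by
  have hsq : P ^ 2 = Q ^ 2 := by linear_combination Q ^ 2 * hP - P ^ 2 * hQ
  refine (sq_eq_sq_iff_eq_or_eq_neg.mp hsq).resolve_right fun hneg => ?_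
  have hQ0 : constantCoeff Q ≠ 0 := by
    intro h
    simpa [h] using congrArg constantCoeff hQ
  have : (2 : R) * constantCoeff Q = 0 := by
    have := congrArg constantCoeff hneg
    rw [map_neg, h0] at this
    linear_combination this
  exact hQ0 ((mul_eq_zero.mp this).resolve_left two_ne_zero)

end PowerSeries

noncomputable def centralBinomSeries (R : Type*) [CommRing R] : R⟦X⟧ :=
  mk fun n => (n.centralBinom : R)

section CentralBinomSeries

variable {R : Type*} [CommRing R]

theorem constantCoeff_centralBinomSeries : constantCoeff (centralBinomSeries R) = 1 := by
  simp [centralBinomSeries, ← coeff_zero_eq_constantCoeff_apply, coeff_mk]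

theorem one_sub_four_mul_X_mul_derivative_centralBinomSeries :
    (1 - 4 * X) * d⁄dX R (centralBinomSeries R) = 2 * centralBinomSeries R := by
  rw [← map_ofNat C 4, ← map_ofNat C 2]
  ext (_ | n) <;>
    simp only [sub_mul, one_mul, mul_assoc, map_sub, coeff_C_mul, coeff_zero_X_mul,
      coeff_succ_X_mul, coeff_derivative, centralBinomSeries, coeff_mk]
  · simp [Nat.centralBinom]
  · have h := congrArg (Nat.cast (R := R)) (Nat.succ_mul_centralBinom_succ (n + 1))
    push_cast at h ⊢
    linear_combination h

theorem coeff_rescale_centralBinomSeries_mul (α β : R) (n : ℕ) :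
    coeff n (rescale α (centralBinomSeries R) * rescale β (centralBinomSeries R)) =
      ∑ k ∈ range (n + 1),
        (k.centralBinom : R) * (n - k).centralBinom * α ^ k * β ^ (n - k) := by
  rw [coeff_mul, Nat.sum_antidiagonal_eq_sum_range_succ
    (fun i j => coeff i (rescale α (centralBinomSeries R)) *
      coeff j (rescale β (centralBinomSeries R)))]
  refine sum_congr rfl fun k _ => ?_
  simp only [coeff_rescale, centralBinomSeries, coeff_mk]
  ring

theorem coeff_rescale_mk_one_mul_subst_centralBinomSeries (c u : R) (n : ℕ) :
    coeff n (rescale c (mk 1) * (centralBinomSeries R).subst (C u * X * rescale c (mk 1) ^ 2)) =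
      ∑ m ∈ range (n + 1),
        (m.centralBinom : R) * (n + m).choose (2 * m) * u ^ m * c ^ (n - m) := by
  refine (coeff_mul_subst (by simp) _ _ n).trans (sum_congr rfl fun m hm => ?_)
  rw [coeff_rescale_mk_one_mul_pow _ _ (Nat.lt_succ_iff.mp (mem_range.mp hm))]
  simp only [centralBinomSeries, coeff_mk]
  ring

variable [IsAddTorsionFree R]

theorem centralBinomSeries_sq_mul_one_sub_four_mul_X :
    centralBinomSeries R ^ 2 * (1 - 4 * X) = 1 := by
  apply derivative.ext
  · have h := one_sub_four_mul_X_mul_derivative_centralBinomSeries (R := R)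
    rw [← map_ofNat C 4] at h ⊢
    simp only [Derivation.leibniz, Derivation.leibniz_pow, map_sub, derivative_X, derivative_C,
      derivative_one, smul_eq_mul, nsmul_eq_mul]
    simp only [map_ofNat] at h ⊢
    linear_combination (2 * centralBinomSeries R) * h
  · simp [constantCoeff_centralBinomSeries]

theorem map_centralBinomSeries_sq_mul {S : Type*} [CommRing S]
    (φ : R⟦X⟧ →+* S) : φ (centralBinomSeries R) ^ 2 * (1 - 4 * φ X) = 1 := by
  simpa only [map_mul, map_pow, map_sub, map_one, map_ofNat] using
    congrArg φ (centralBinomSeries_sq_mul_one_sub_four_mul_X (R := R))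

theorem rescale_centralBinomSeries_mul_sq_mul (α β : R) :
    (rescale α (centralBinomSeries R) * rescale β (centralBinomSeries R)) ^ 2 *
      ((1 - 4 * (C α * X)) * (1 - 4 * (C β * X))) = 1 := by
  have hα := map_centralBinomSeries_sq_mul (rescale α)
  have hβ := map_centralBinomSeries_sq_mul (rescale β)
  rw [rescale_X] at hα hβ
  linear_combination
    (rescale β (centralBinomSeries R) ^ 2 * (1 - 4 * (C β * X))) * hα + hβ

theorem rescale_mk_one_mul_subst_centralBinomSeries_sq_mul (c u : R) :
    (rescale c (mk 1) * (centralBinomSeries R).subst (C u * X * rescale c (mk 1) ^ 2)) ^ 2 *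
      ((1 - C c * X) ^ 2 - 4 * (C u * X)) = 1 := by
  set D : R⟦X⟧ := rescale c (mk 1)
  set Z := C u * X * D ^ 2 with hZdef
  have hZ : HasSubst Z := HasSubst.of_constantCoeff_zero' (by simp [Z])
  set S : R⟦X⟧ := (centralBinomSeries R).subst Z
  have hS : S ^ 2 * (1 - 4 * Z) = 1 := by
    simpa only [AlgHom.toRingHom_eq_coe, RingHom.coe_coe, coe_substAlgHom, subst_X hZ] using
      map_centralBinomSeries_sq_mul (substAlgHom hZ).toRingHom
  have hD : D * (1 - C c * X) = 1 := by
    rw [← rescale_X, ← map_one (rescale c), ← map_sub, ← map_mul, mk_one_mul_one_sub_eq_one,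
      map_one]
  clear_value S Z D
  subst hZdef
  linear_combination S ^ 2 * (D * (1 - C c * X) + 1) * hD + hS

end CentralBinomSeries

theorem sum_centralBinom_mul_centralBinom_mul_pow {R : Type*} [CommRing R] [IsDomain R]
    [CharZero R] (a b : R) (n : ℕ) :
    ∑ k ∈ range (n + 1),
        (k.centralBinom : R) * (n - k).centralBinom * a ^ (2 * k) * b ^ (2 * (n - k)) =
      ∑ m ∈ range (n + 1),
        (m.centralBinom : R) * (n + m).choose (2 * m) * (a - b) ^ (2 * m) *
          (4 * a * b) ^ (n - m) := by
  have hE : (1 - 4 * (C (a ^ 2) * X)) * (1 - 4 * (C (b ^ 2) * X)) =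
      (1 - C (4 * a * b) * X) ^ 2 - 4 * (C ((a - b) ^ 2) * X) := by
    simp only [map_mul, map_pow, map_sub, map_ofNat]
    ring
  have hPQ := eq_of_sq_mul_eq_one (rescale_centralBinomSeries_mul_sq_mul (a ^ 2) (b ^ 2))
    (hE ▸ rescale_mk_one_mul_subst_centralBinomSeries_sq_mul (4 * a * b) ((a - b) ^ 2)) (by
      simp only [← coeff_zero_eq_constantCoeff_apply, coeff_rescale_centralBinomSeries_mul,
        coeff_rescale_mk_one_mul_subst_centralBinomSeries]
      simp)
  simpa only [coeff_rescale_centralBinomSeries_mul,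
    coeff_rescale_mk_one_mul_subst_centralBinomSeries, pow_mul] using congrArg (coeff n) hPQ

theorem pochR_eq_eval_ascPochhammer (a : ℝ) (k : ℕ) :
    pochR a k = (ascPochhammer ℝ k).eval a := by
  induction k with
  | zero => simp [pochR]
  | succ k ih => simp [pochR, prod_range_succ, ascPochhammer_succ_right, ← ih]

theorem pochR_succ (a : ℝ) (k : ℕ) : pochR a (k + 1) = pochR a k * (a + k) :=
  prod_range_succ _ _

theorem pochR_neg_natCast (n k : ℕ) : pochR (-n) k = (-1) ^ k * n.descFactorial k := by
  rw [pochR_eq_eval_ascPochhammer, ascPochhammer_eval_neg_eq_descPochhammer,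
    descPochhammer_eval_eq_descFactorial]

theorem pochR_one_sub_sub_mul_pochR (a : ℝ) (m k : ℕ) :
    pochR (1 - a - (m + k : ℕ)) k * pochR a m = (-1) ^ k * pochR a (m + k) := by
  rw [pochR_eq_eval_ascPochhammer, pochR_eq_eval_ascPochhammer, pochR_eq_eval_ascPochhammer,
    ← ascPochhammer_mul, show 1 - a - ((m + k : ℕ) : ℝ) = -(a + m + k - 1) by push_cast; ring,
    ascPochhammer_eval_neg_eq_descPochhammer, descPochhammer_eval_eq_ascPochhammer]
  simp only [Polynomial.eval_mul, Polynomial.eval_comp, Polynomial.eval_add, Polynomial.eval_X,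
    Polynomial.eval_natCast]
  rw [show a + m + k - 1 - k + 1 = a + m by ring]
  ring

theorem pochR_one_half_mul_four_pow (k : ℕ) :
    pochR (1 / 2) k * 4 ^ k = k.centralBinom * k.factorial := by
  induction k with
  | zero => simp [pochR]
  | succ k ih =>
    have h := congrArg (Nat.cast (R := ℝ)) (Nat.succ_mul_centralBinom_succ k)
    push_cast at h ⊢
    rw [pochR_succ, Nat.factorial_succ]
    push_cast
    linear_combination (2 + 4 * (k : ℝ)) * ih - k.factorial * h

theorem pochR_one_half_pos (k : ℕ) : 0 < pochR (1 / 2) k :=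
  prod_pos fun i _ => by positivity

theorem cast_add_descFactorial {K : Type*} [Field K] [CharZero K] (m k : ℕ) :
    ((m + k).descFactorial k : K) = (m + k).factorial / m.factorial := by
  rw [eq_div_iff (Nat.cast_ne_zero.mpr (Nat.factorial_ne_zero m))]
  exact_mod_cast by simpa [mul_comm] using Nat.factorial_mul_descFactorial (Nat.le_add_left k m)

theorem cast_centralBinom {K : Type*} [Field K] [CharZero K] (n : ℕ) :
    (n.centralBinom : K) = (n + n).factorial / (n.factorial * n.factorial) := by
  rw [Nat.centralBinom_eq_two_mul_choose, two_mul, Nat.cast_add_choose]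

theorem pochR_neg_mul_pochR_one_half_div_mul_centralBinom (j k : ℕ) (hk : k ≤ j) :
    pochR (-j) k * pochR (1 / 2) k / (pochR (1 / 2 - j) k * k.factorial) * j.centralBinom =
      k.centralBinom * (j - k).centralBinom := by
  obtain ⟨m, rfl⟩ := Nat.exists_eq_add_of_le' hk
  have hrefl := pochR_one_sub_sub_mul_pochR (1 / 2) m k
  rw [show (1 : ℝ) - 1 / 2 = 1 / 2 by norm_num] at hrefl
  have hk := pochR_one_half_mul_four_pow k
  have hm := pochR_one_half_mul_four_pow m
  have hmk := pochR_one_half_mul_four_pow (m + k)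
  rw [pochR_neg_natCast, Nat.add_sub_cancel, eq_div_of_mul_eq (pochR_one_half_pos m).ne' hrefl,
    eq_div_of_mul_eq (by positivity) hk, eq_div_of_mul_eq (by positivity) hm,
    eq_div_of_mul_eq (by positivity) hmk, cast_add_descFactorial]
  have : ((m + k).centralBinom : ℝ) ≠ 0 := Nat.cast_ne_zero.mpr (Nat.centralBinom_ne_zero _)
  field_simp
  ring

theorem pochR_neg_mul_pochR_neg_div_mul_centralBinom (j k : ℕ) (hk : k ≤ j) :
    pochR (-j) k * pochR (-j) k / (pochR (-2 * j) k * k.factorial) * j.centralBinom =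
      (-1) ^ k * (j - k).centralBinom * (j + (j - k)).choose (2 * (j - k)) := by
  obtain ⟨m, rfl⟩ := Nat.exists_eq_add_of_le' hk
  have hchoose : ((m + k + (m + k - k)).choose (2 * (m + k - k)) : ℝ) =
      (m + k + m).factorial / ((m + m).factorial * k.factorial) := by
    rw [Nat.add_sub_cancel, show m + k + m = m + m + k by ring, two_mul, Nat.cast_add_choose]
  rw [hchoose, show -2 * ((m + k : ℕ) : ℝ) = -((m + k + m + k : ℕ) : ℝ) by push_cast; ring,
    pochR_neg_natCast, pochR_neg_natCast, Nat.add_sub_cancel, cast_add_descFactorial,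
    cast_add_descFactorial, cast_centralBinom, cast_centralBinom, ← add_assoc]
  field_simp

theorem propagator_term_mul_centralBinom_mul_pow {s : ℝ} (hs : s ≠ 0) {j k : ℕ}
    (hk : k ≤ j) :
    s ^ j * (pochR (-j) k * pochR (1 / 2) k / (pochR (1 / 2 - j) k * k.factorial) *
        s ^ (-(2 * k : ℤ))) * (j.centralBinom * s ^ j) =
      k.centralBinom * (j - k).centralBinom * s ^ (2 * (j - k)) := by
  have hpow : s ^ (2 * (j - k)) * s ^ (2 * k) = s ^ j * s ^ j := by
    rw [← pow_add, ← pow_add]; congr 1; omega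
  rw [zpow_neg, show (2 * k : ℤ) = ((2 * k : ℕ) : ℤ) by push_cast; ring, zpow_natCast,
    ← pochR_neg_mul_pochR_one_half_div_mul_centralBinom j k hk]
  generalize pochR (-j) k * pochR (1 / 2) k / (pochR (1 / 2 - j) k * k.factorial) = t
  rw [← mul_inv_cancel_right₀ (pow_ne_zero (2 * k) hs) (s ^ (2 * (j - k))), hpow]
  ring

theorem vertex_term_mul_centralBinom_mul_pow {q s : ℝ} (hq : q ≠ 0)
    (hqs : (1 - s) ^ 2 = q ^ 2 * s) {j k : ℕ} (hk : k ≤ j) :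
    q ^ (2 * j) * (pochR (-j) k * pochR (-j) k / (pochR (-2 * j) k * k.factorial) *
        (-4 / q ^ 2) ^ k) * (j.centralBinom * s ^ j) =
      (j - k).centralBinom * (j + (j - k)).choose (2 * (j - k)) * (1 - s) ^ (2 * (j - k)) *
        (4 * s) ^ (j - (j - k)) := by
  obtain ⟨m, rfl⟩ := Nat.exists_eq_add_of_le' hk
  have hterm := pochR_neg_mul_pochR_neg_div_mul_centralBinom (m + k) k hk
  generalize pochR (-((m + k : ℕ) : ℝ)) k * pochR (-((m + k : ℕ) : ℝ)) k /
    (pochR (-2 * ((m + k : ℕ) : ℝ)) k * k.factorial) = t at hterm ⊢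
  simp only [Nat.add_sub_cancel, Nat.add_sub_cancel_left, pow_mul, hqs] at hterm ⊢
  have hsign : ((-1 : ℝ) ^ k) ^ 2 = 1 := by rw [← pow_mul, Even.neg_one_pow ⟨k, by ring⟩]
  have hq2 : (q ^ 2) ^ (m + k) * (4 / q ^ 2) ^ k = (q ^ 2) ^ m * 4 ^ k := by
    rw [pow_add, div_pow]; field_simp
  rw [show (q ^ 2) ^ (m + k) * (t * (-4 / q ^ 2) ^ k) * ((m + k).centralBinom * s ^ (m + k)) =
    t * (m + k).centralBinom * (-1) ^ k * ((q ^ 2) ^ (m + k) * (4 / q ^ 2) ^ k) * s ^ (m + k) by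
      rw [neg_div, neg_pow]; ring, hterm, hq2]
  linear_combination (m.centralBinom * ((m + k + m).choose (2 * m)) * (q ^ 2) ^ m * 4 ^ k *
    s ^ (m + k) : ℝ) * hsign

/-- The 2-point AdS vertex function coincides with the bulk-to-bulk propagator on a
constant-`ρ` slice: instance of the quadratic hypergeometric transformation. -/
theorem stmt_12 (j : ℕ) (q : ℝ) (hq : 0 < q) (s : ℝ)
    (hs : s = (q * Real.sqrt (4 + q ^ 2) + 2 + q ^ 2) / 2) :
    s ^ j *
        ∑ k ∈ Finset.range (j + 1),
          pochR (-(j : ℝ)) k * pochR (1 / 2) k /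
              (pochR (1 / 2 - j) k * (Nat.factorial k : ℝ)) * s ^ (-(2 * k : ℤ)) =
      q ^ (2 * j) *
        ∑ k ∈ Finset.range (j + 1),
          pochR (-(j : ℝ)) k * pochR (-(j : ℝ)) k /
              (pochR (-2 * j) k * (Nat.factorial k : ℝ)) * (-4 / q ^ 2) ^ k := by
  have hr : Real.sqrt (4 + q ^ 2) ^ 2 = 4 + q ^ 2 := Real.sq_sqrt (by positivity)
  have hs0 : s ≠ 0 := by rw [hs]; positivity
  have hqs : (1 - s) ^ 2 = q ^ 2 * s := by rw [hs]; linear_combination (q ^ 2 / 4) * hr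
  have hc : (j.centralBinom : ℝ) * s ^ j ≠ 0 :=
    mul_ne_zero (Nat.cast_ne_zero.mpr (Nat.centralBinom_ne_zero j)) (pow_ne_zero j hs0)
  refine mul_right_cancel₀ hc ?_
  rw [mul_sum, mul_sum, sum_mul, sum_mul]
  have key := sum_centralBinom_mul_centralBinom_mul_pow (1 : ℝ) s j
  simp only [one_pow, mul_one] at key
  convert key using 1
  · exact sum_congr rfl fun k hk =>
      propagator_term_mul_centralBinom_mul_pow hs0 (Nat.lt_succ_iff.mp (mem_range.mp hk))
  · rw [eq_comm, ← sum_range_reflect]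
    refine sum_congr rfl fun k hk => ?_
    rw [Nat.add_sub_cancel]
    exact (vertex_term_mul_centralBinom_mul_pow hq.ne' hqs
      (Nat.lt_succ_iff.mp (mem_range.mp hk))).symm
end

section
/- Let j₁, j₂, j₃ ∈ ℕ satisfy the triangle inequalities |j₁−j₂| ≤ j₃ ≤ j₁+j₂, and let z₁, z₂, z₃ be pairwise distinct complex numbers and ρ ∈ ℝ. Then ∑_{m₁=−j₁}^{j₁} ∑_{m₂=−j₂}^{j₂} ∑_{m₃=−j₃}^{j₃} [I_{j₁j₂j₃}]^{m₁}{}_{m₂m₃} · ⟨ã₁|j₁,m₁⟩ · ⟨j₂,m₂|ã₂⟩ · ⟨j₃,m₃|ã₃⟩ = C(j₁,j₂,j₃) · e^{ρ(j₁+j₂+j₃)} · (z₁−z₂)^{j₁+j₂−j₃} · (z₁−z₃)^{j₁+j₃−j₂} · (z₂−z₃)^{j₂+j₃−j₁}, where ⟨ã₁|j₁,m₁⟩ := (−1)^{j₁+m₁}·A(j₁,m₁)·z₁^{j₁+m₁}·e^{ρj₁} and ⟨j_i,m_i|ã_i⟩ := A(j_i,m_i)·z_i^{j_i−m_i}·e^{ρj_i}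 for i = 2,3. -/
/-- `x!` for an integer `x` (the arguments used below are non-negative). -/
noncomputable def zfact (x : ℤ) : ℝ := (Nat.factorial x.toNat : ℝ)

/-- `A(j,m) = √((2j)! / ((j+m)!(j-m)!))`. -/
noncomputable def wA (j m : ℤ) : ℝ :=
  Real.sqrt (zfact (2 * j) / (zfact (j + m) * zfact (j - m)))

/-- The 3-valent `sl(2)` intertwiner `[I_{j₁j₂j₃}]^{m₁}{}_{m₂m₃}` (eq. (A.2)). -/
noncomputable def wI (j₁ j₂ j₃ m₁ m₂ m₃ : ℤ) : ℝ :=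
  if m₁ = m₂ + m₃ then
    (-1 : ℝ) ^ (j₂ + m₁ - m₃) *
      Real.sqrt (zfact (-j₁ + j₂ + j₃) * zfact (j₁ + j₂ - j₃) * zfact (j₁ - j₂ + j₃) *
          zfact (j₁ + m₁) * zfact (j₁ - m₁) / zfact (j₁ + j₂ + j₃ + 1)) *
      ∑ k ∈ Finset.Icc (max 0 (max (m₂ + j₁ - j₃) (m₁ + j₂ - j₃)))
          (min (m₂ + j₂) (min (m₁ + j₁) (j₁ + j₂ - j₃))),
        (-1 : ℝ) ^ k *
          Real.sqrt (zfact (j₂ + m₂) * zfact (j₂ - m₂) * zfact (j₃ + m₃) * zfact (j₃ - m₃)) /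
          (zfact k * zfact (j₁ + m₁ - k) * zfact (j₂ + m₂ - k) * zfact (j₁ + j₂ - j₃ - k) *
            zfact (j₃ - j₁ - m₂ + k) * zfact (j₃ - j₂ - m₁ + k))
  else 0

/-- Modified triangle coefficient `Δ(a,b,c)`. -/
noncomputable def wΔ (a b c : ℤ) : ℝ :=
  zfact (a + b + c + 1) * zfact (a + b - c) * zfact (a + c - b) * zfact (b + c - a)

/-- Structure constant `C(j₁,j₂,j₃) = √((2j₁)!(2j₂)!(2j₃)!/Δ(j₁,j₂,j₃))`. -/
noncomputable def wC (a b c : ℤ) : ℝ :=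
  Real.sqrt (zfact (2 * a) * zfact (2 * b) * zfact (2 * c) / wΔ a b c)

/-!
After resolving `δ_{m₁,m₂+m₃}`, the labels `(m₁, m₂, m₃; k)` of the network are in bijection with
the triples `0 ≤ p ≤ a`, `0 ≤ q ≤ b`, `0 ≤ r ≤ c`, where `a = j₁+j₂-j₃`, `b = j₁+j₃-j₂`,
`c = j₂+j₃-j₁`, via `p = k`, `q = j₁+m₁-k`, `r = j₃-j₁-m₂+k`. Under this bijection every term of the
network is `C(j₁,j₂,j₃) e^{ρ(j₁+j₂+j₃)}` times the term
`z₁^p (-z₂)^(a-p) (a choose p) · z₁^q (-z₃)^(b-q) (b choose q) · z₂^r (-z₃)^(c-r) (c choose r)`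
of the binomial expansion of `(z₁-z₂)^a (z₁-z₃)^b (z₂-z₃)^c`: all square roots of factorials
collapse to `C` times the three binomial coefficients, and the signs agree because `a + b = 2 j₁`.
-/

open Finset
open scoped Nat

lemma zfact_eq_factorial {x : ℤ} {n : ℕ} (h : x = n) : zfact x = n ! := by
  rw [zfact, h, Int.toNat_natCast]

lemma wA_eq_sqrt {j m : ℤ} {n u v : ℕ} (hn : 2 * j = n) (hu : j + m = u) (hv : j - m = v) :
    wA j m = √(n ! / (u ! * v !)) := by
  rw [wA, zfact_eq_factorial hn, zfact_eq_factorial hu, zfact_eq_factorial hv]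

lemma wC_eq_sqrt {j₁ j₂ j₃ : ℤ} {a b c : ℕ} (ha : j₁ + j₂ - j₃ = a) (hb : j₁ + j₃ - j₂ = b)
    (hc : j₂ + j₃ - j₁ = c) :
    wC j₁ j₂ j₃ = √((a + b)! * (a + c)! * (b + c)! / ((a + b + c + 1)! * a ! * b ! * c !)) := by
  rw [wC, wΔ, zfact_eq_factorial (n := a + b) (by omega),
    zfact_eq_factorial (n := a + c) (by omega), zfact_eq_factorial (n := b + c) (by omega),
    zfact_eq_factorial (n := a + b + c + 1) (by push_cast; omega), zfact_eq_factorial ha,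
    zfact_eq_factorial hb, zfact_eq_factorial hc]

lemma sqrt_factorial_vertex_identity (p p' q q' r r' : ℕ) :
    √((r + r')! * (p + p')! * (q + q')! * (p + q)! * (p' + q')! /
        (p + p' + (q + q') + (r + r') + 1)!) *
      (√((r' + p)! * (p' + r)! * (q + r)! * (q' + r')!) /
        (p ! * q ! * r' ! * p' ! * r ! * q' !)) *
      √((p + p' + (q + q'))! / ((p + q)! * (p' + q')!)) *
      √((p + p' + (r + r'))! / ((r' + p)! * (p' + r)!)) *
      √((q + q' + (r + r'))! / ((q + r)! * (q' + r')!)) =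
    √((p + p' + (q + q'))! * (p + p' + (r + r'))! * (q + q' + (r + r'))! /
        ((p + p' + (q + q') + (r + r') + 1)! * (p + p')! * (q + q')! * (r + r')!)) *
      ((p + p').choose p * (q + q').choose q * (r + r').choose r) := by
  have hP : (0 : ℝ) ≤ p ! * q ! * r' ! * p' ! * r ! * q' ! := by positivity
  have hB : (0 : ℝ) ≤ (p + p').choose p * (q + q').choose q * (r + r').choose r := by positivity
  rw [← Real.sqrt_sq hP, ← Real.sqrt_div' _ (sq_nonneg _), ← Real.sqrt_sq hB,
    ← Real.sqrt_mul (by positivity), ← Real.sqrt_mul (by positivity),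
    ← Real.sqrt_mul (by positivity), ← Real.sqrt_mul (by positivity),
    ← Real.sqrt_mul (by positivity)]
  congr 1
  simp only [Nat.cast_add_choose]
  field_simp

noncomputable def wIsummand (j₁ j₂ j₃ m₁ m₂ m₃ k : ℤ) : ℝ :=
  (-1 : ℝ) ^ (j₂ + m₁ - m₃) *
    Real.sqrt (zfact (-j₁ + j₂ + j₃) * zfact (j₁ + j₂ - j₃) * zfact (j₁ - j₂ + j₃) *
        zfact (j₁ + m₁) * zfact (j₁ - m₁) / zfact (j₁ + j₂ + j₃ + 1)) *
    ((-1 : ℝ) ^ k *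
      Real.sqrt (zfact (j₂ + m₂) * zfact (j₂ - m₂) * zfact (j₃ + m₃) * zfact (j₃ - m₃)) /
      (zfact k * zfact (j₁ + m₁ - k) * zfact (j₂ + m₂ - k) * zfact (j₁ + j₂ - j₃ - k) *
        zfact (j₃ - j₁ - m₂ + k) * zfact (j₃ - j₂ - m₁ + k)))

noncomputable def kRange (j₁ j₂ j₃ m₁ m₂ : ℤ) : Finset ℤ :=
  Icc (max 0 (max (m₂ + j₁ - j₃) (m₁ + j₂ - j₃))) (min (m₂ + j₂) (min (m₁ + j₁) (j₁ + j₂ - j₃)))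

lemma wI_of_eq {j₁ j₂ j₃ m₁ m₂ m₃ : ℤ} (h : m₁ = m₂ + m₃) :
    wI j₁ j₂ j₃ m₁ m₂ m₃ = ∑ k ∈ kRange j₁ j₂ j₃ m₁ m₂, wIsummand j₁ j₂ j₃ m₁ m₂ m₃ k := by
  rw [wI, if_pos h, mul_sum]
  rfl

lemma wI_of_ne {j₁ j₂ j₃ m₁ m₂ m₃ : ℤ} (h : m₁ ≠ m₂ + m₃) : wI j₁ j₂ j₃ m₁ m₂ m₃ = 0 :=
  if_neg h

section IntegerLabels

variable {j₁ j₂ j₃ m₁ m₂ m₃ k : ℤ} {p p' q q' r r' : ℕ}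

lemma wIsummand_mul_wA (hm : m₁ = m₂ + m₃) (hp : k = p) (hp' : j₁ + j₂ - j₃ - k = p')
    (hq : j₁ + m₁ - k = q) (hq' : j₃ - j₂ - m₁ + k = q') (hr : j₃ - j₁ - m₂ + k = r)
    (hr' : j₂ + m₂ - k = r') :
    wIsummand j₁ j₂ j₃ m₁ m₂ m₃ k * (wA j₁ m₁ * wA j₂ m₂ * wA j₃ m₃) =
      (-1) ^ (j₂ + m₁ - m₃ + k) *
        (wC j₁ j₂ j₃ * ((p + p').choose p * (q + q').choose q * (r + r').choose r)) := by
  rw [wIsummand,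
    wA_eq_sqrt (n := p + p' + (q + q')) (u := p + q) (v := p' + q') (by omega) (by omega)
      (by omega),
    wA_eq_sqrt (n := p + p' + (r + r')) (u := r' + p) (v := p' + r) (by omega) (by omega)
      (by omega),
    wA_eq_sqrt (n := q + q' + (r + r')) (u := q + r) (v := q' + r') (by omega) (by omega)
      (by omega),
    wC_eq_sqrt (a := p + p') (b := q + q') (c := r + r') (by omega) (by omega)
      (by omega),
    zfact_eq_factorial (x := -j₁ + j₂ + j₃) (n := r + r') (by omega),
    zfact_eq_factorial (x := j₁ + j₂ - j₃) (n := p + p') (by omega),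
    zfact_eq_factorial (x := j₁ - j₂ + j₃) (n := q + q') (by omega),
    zfact_eq_factorial (x := j₁ + m₁) (n := p + q) (by omega),
    zfact_eq_factorial (x := j₁ - m₁) (n := p' + q') (by omega),
    zfact_eq_factorial (x := j₁ + j₂ + j₃ + 1) (n := p + p' + (q + q') + (r + r') + 1)
      (by push_cast; omega),
    zfact_eq_factorial (x := j₂ + m₂) (n := r' + p) (by omega),
    zfact_eq_factorial (x := j₂ - m₂) (n := p' + r) (by omega),
    zfact_eq_factorial (x := j₃ + m₃) (n := q + r) (by omega),
    zfact_eq_factorial (x := j₃ - m₃) (n := q' + r') (by omega),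
    zfact_eq_factorial hp, zfact_eq_factorial hq, zfact_eq_factorial hr', zfact_eq_factorial hp',
    zfact_eq_factorial hr, zfact_eq_factorial hq', ← sqrt_factorial_vertex_identity,
    zpow_add₀ (by norm_num)]
  ring

lemma neg_one_zpow_mul_monomials {K : Type*} [Field K] (hm : m₁ = m₂ + m₃) (hp : k = p)
    (hp' : j₁ + j₂ - j₃ - k = p') (hq : j₁ + m₁ - k = q) (hq' : j₃ - j₂ - m₁ + k = q')
    (hr : j₃ - j₁ - m₂ + k = r) (hr' : j₂ + m₂ - k = r') (z₁ z₂ z₃ : K) :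
    (-1 : K) ^ (j₂ + m₁ - m₃ + k) * (-1) ^ (j₁ + m₁) *
        (z₁ ^ (j₁ + m₁) * z₂ ^ (j₂ - m₂) * z₃ ^ (j₃ - m₃)) =
      z₁ ^ p * (-z₂) ^ p' * (z₁ ^ q * (-z₃) ^ q') * (z₂ ^ r * (-z₃) ^ r') := by
  have hsign : (-1 : K) ^ (j₂ + m₁ - m₃ + k) * (-1) ^ (j₁ + m₁) = (-1) ^ (p' + q' + r') := by
    rw [← zpow_add₀ (by norm_num), ← zpow_natCast,
      show j₂ + m₁ - m₃ + k + (j₁ + m₁) = ((p' + q' + r' : ℕ) : ℤ) + 2 * (2 * p + q - j₁) by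
        push_cast; omega,
      zpow_add₀ (by norm_num), (even_two_mul _).neg_one_zpow, mul_one]
  rw [hsign, show j₁ + m₁ = ((p + q : ℕ) : ℤ) by push_cast; omega,
    show j₂ - m₂ = ((p' + r : ℕ) : ℤ) by push_cast; omega,
    show j₃ - m₃ = ((q' + r' : ℕ) : ℤ) by push_cast; omega]
  simp only [zpow_natCast, neg_pow z₂, neg_pow z₃]
  ring

end IntegerLabels

/-- `wilsonBra j z ρ m = ⟨ã|j,m⟩` and `wilsonKet j z ρ m = ⟨j,m|ã⟩`, eq. (4.10). -/
noncomputable def wilsonBra (j : ℕ) (z : ℂ) (ρ : ℝ) (m : ℤ) : ℂ :=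
  (-1 : ℂ) ^ ((j : ℤ) + m) * (wA j m : ℂ) * z ^ ((j : ℤ) + m) * (Real.exp (ρ * j) : ℂ)

noncomputable def wilsonKet (j : ℕ) (z : ℂ) (ρ : ℝ) (m : ℤ) : ℂ :=
  (wA j m : ℂ) * z ^ ((j : ℤ) - m) * (Real.exp (ρ * j) : ℂ)

section NaturalSpins

variable {j₁ j₂ j₃ : ℕ} {m₁ m₂ m₃ k : ℤ} {p p' q q' r r' : ℕ}

lemma wIsummand_mul_wilson (hm : m₁ = m₂ + m₃) (hp : k = p)
    (hp' : (j₁ : ℤ) + j₂ - j₃ - k = p') (hq : j₁ + m₁ - k = q) (hq' : (j₃ : ℤ) - j₂ - m₁ + k = q')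
    (hr : (j₃ : ℤ) - j₁ - m₂ + k = r) (hr' : j₂ + m₂ - k = r') (z₁ z₂ z₃ : ℂ) (ρ : ℝ) :
    (wIsummand j₁ j₂ j₃ m₁ m₂ m₃ k : ℂ) *
        (wilsonBra j₁ z₁ ρ m₁ * wilsonKet j₂ z₂ ρ m₂ * wilsonKet j₃ z₃ ρ m₃) =
      wC j₁ j₂ j₃ * Real.exp (ρ * (j₁ + j₂ + j₃)) *
        (z₁ ^ p * (-z₂) ^ p' * ((p + p').choose p : ℂ) *
          (z₁ ^ q * (-z₃) ^ q' * ((q + q').choose q : ℂ)) *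
          (z₂ ^ r * (-z₃) ^ r' * ((r + r').choose r : ℂ))) := by
  have hexp : Real.exp (ρ * j₁) * Real.exp (ρ * j₂) * Real.exp (ρ * j₃) =
      Real.exp (ρ * (j₁ + j₂ + j₃)) := by
    rw [← Real.exp_add, ← Real.exp_add]; ring_nf
  calc _ = ((wIsummand j₁ j₂ j₃ m₁ m₂ m₃ k * (wA j₁ m₁ * wA j₂ m₂ * wA j₃ m₃) : ℝ) : ℂ) *
        ((-1) ^ ((j₁ : ℤ) + m₁) *
          (z₁ ^ ((j₁ : ℤ) + m₁) * z₂ ^ ((j₂ : ℤ) - m₂) * z₃ ^ ((j₃ : ℤ) - m₃))) *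
        ((Real.exp (ρ * j₁) * Real.exp (ρ * j₂) * Real.exp (ρ * j₃) : ℝ) : ℂ) := by
        simp only [wilsonBra, wilsonKet]; push_cast; ring
    _ = wC j₁ j₂ j₃ * Real.exp (ρ * (j₁ + j₂ + j₃)) *
        ((-1) ^ ((j₂ : ℤ) + m₁ - m₃ + k) * (-1) ^ ((j₁ : ℤ) + m₁) *
          (z₁ ^ ((j₁ : ℤ) + m₁) * z₂ ^ ((j₂ : ℤ) - m₂) * z₃ ^ ((j₃ : ℤ) - m₃))) *
        ((p + p').choose p * (q + q').choose q * (r + r').choose r : ℂ) := by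
        rw [wIsummand_mul_wA hm hp hp' hq hq' hr hr', hexp]; push_cast; ring
    _ = _ := by rw [neg_one_zpow_mul_monomials hm hp hp' hq hq' hr hr']; ring

end NaturalSpins

noncomputable def networkTerm (j₁ j₂ j₃ : ℕ) (z₁ z₂ z₃ : ℂ) (ρ : ℝ) (x : (_ : ℤ × ℤ × ℤ) × ℤ) : ℂ :=
  (wIsummand j₁ j₂ j₃ x.1.1 x.1.2.1 x.1.2.2 x.2 : ℂ) *
    (wilsonBra j₁ z₁ ρ x.1.1 * wilsonKet j₂ z₂ ρ x.1.2.1 * wilsonKet j₃ z₃ ρ x.1.2.2)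

noncomputable def networkLabels (j₁ j₂ j₃ : ℕ) : Finset ((_ : ℤ × ℤ × ℤ) × ℤ) :=
  ((Icc (-(j₁ : ℤ)) j₁ ×ˢ Icc (-(j₂ : ℤ)) j₂ ×ˢ Icc (-(j₃ : ℤ)) j₃).filter
      fun m => m.1 = m.2.1 + m.2.2).sigma
    fun m => kRange j₁ j₂ j₃ m.1 m.2.1

lemma sum_wI_mul_eq_sum_networkLabels (j₁ j₂ j₃ : ℕ) (f₁ f₂ f₃ : ℤ → ℂ) :
    ∑ m₁ ∈ Icc (-(j₁ : ℤ)) j₁, ∑ m₂ ∈ Icc (-(j₂ : ℤ)) j₂, ∑ m₃ ∈ Icc (-(j₃ : ℤ)) j₃,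
        (wI j₁ j₂ j₃ m₁ m₂ m₃ : ℂ) * f₁ m₁ * f₂ m₂ * f₃ m₃ =
      ∑ x ∈ networkLabels j₁ j₂ j₃, (wIsummand j₁ j₂ j₃ x.1.1 x.1.2.1 x.1.2.2 x.2 : ℂ) *
        (f₁ x.1.1 * f₂ x.1.2.1 * f₃ x.1.2.2) := by
  rw [networkLabels, sum_sigma, sum_filter]
  simp only [sum_product]
  refine sum_congr rfl fun m₁ _ => sum_congr rfl fun m₂ _ => sum_congr rfl fun m₃ _ => ?_
  by_cases h : m₁ = m₂ + m₃
  · rw [if_pos h, wI_of_eq h]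
    push_cast
    simp only [mul_assoc, sum_mul]
  · rw [if_neg h, wI_of_ne h]
    simp

def labelsOfExponents (j₁ j₃ : ℕ) (y : ℕ × ℕ × ℕ) : (_ : ℤ × ℤ × ℤ) × ℤ :=
  ⟨((y.1 : ℤ) + y.2.1 - j₁, (j₃ : ℤ) - j₁ + y.1 - y.2.2, (y.2.1 : ℤ) + y.2.2 - j₃), y.1⟩

def exponentsOfLabels (j₁ j₃ : ℕ) (x : (_ : ℤ × ℤ × ℤ) × ℤ) : ℕ × ℕ × ℕ :=
  (x.2.toNat, ((j₁ : ℤ) + x.1.1 - x.2).toNat, ((j₃ : ℤ) - j₁ - x.1.2.1 + x.2).toNat)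

lemma sum_networkLabels_eq {M : Type*} [AddCommMonoid M] {j₁ j₂ j₃ a b c : ℕ}
    (ha : (a : ℤ) = j₁ + j₂ - j₃) (hb : (b : ℤ) = j₁ + j₃ - j₂) (hc : (c : ℤ) = j₂ + j₃ - j₁)
    (g : ((_ : ℤ × ℤ × ℤ) × ℤ) → M) :
    ∑ x ∈ networkLabels j₁ j₂ j₃, g x =
      ∑ y ∈ range (a + 1) ×ˢ range (b + 1) ×ˢ range (c + 1), g (labelsOfExponents j₁ j₃ y) := by
  have left_inv : ∀ x ∈ networkLabels j₁ j₂ j₃,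
      labelsOfExponents j₁ j₃ (exponentsOfLabels j₁ j₃ x) = x := by
    rintro ⟨⟨m₁, m₂, m₃⟩, k⟩ hx
    simp only [networkLabels, kRange, mem_sigma, mem_filter, mem_product, mem_Icc, max_le_iff,
      le_min_iff] at hx
    simp only [labelsOfExponents, exponentsOfLabels, Sigma.mk.injEq, Prod.mk.injEq, heq_eq_eq]
    omega
  refine sum_nbij' (exponentsOfLabels j₁ j₃) (labelsOfExponents j₁ j₃) ?_ ?_ left_inv ?_
    (fun x hx => by rw [left_inv x hx])
  · rintro ⟨⟨m₁, m₂, m₃⟩, k⟩ hx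
    simp only [networkLabels, kRange, exponentsOfLabels, mem_sigma, mem_filter, mem_product,
      mem_Icc, mem_range, max_le_iff, le_min_iff] at hx ⊢
    omega
  · rintro ⟨p, q, r⟩ hy
    simp only [networkLabels, kRange, labelsOfExponents, mem_sigma, mem_filter, mem_product,
      mem_Icc, mem_range, max_le_iff, le_min_iff] at hy ⊢
    omega
  · rintro ⟨p, q, r⟩ hy
    simp only [labelsOfExponents, exponentsOfLabels, Prod.mk.injEq]
    omega

lemma sub_pow_mul_sub_pow_mul_sub_pow {R : Type*} [CommRing R] (x₁ x₂ x₃ : R) (a b c : ℕ) :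
    (x₁ - x₂) ^ a * (x₁ - x₃) ^ b * (x₂ - x₃) ^ c =
      ∑ y ∈ range (a + 1) ×ˢ range (b + 1) ×ˢ range (c + 1),
        x₁ ^ y.1 * (-x₂) ^ (a - y.1) * (a.choose y.1 : R) *
          (x₁ ^ y.2.1 * (-x₃) ^ (b - y.2.1) * (b.choose y.2.1 : R)) *
          (x₂ ^ y.2.2 * (-x₃) ^ (c - y.2.2) * (c.choose y.2.2 : R)) := by
  rw [sub_eq_add_neg, sub_eq_add_neg, sub_eq_add_neg, add_pow, add_pow, add_pow, sum_mul_sum,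
    sum_mul, sum_product]
  exact sum_congr rfl fun p _ => by rw [sum_mul_sum, sum_product]

lemma networkTerm_labelsOfExponents {j₁ j₂ j₃ a b c : ℕ} (ha : (a : ℤ) = j₁ + j₂ - j₃)
    (hb : (b : ℤ) = j₁ + j₃ - j₂) (hc : (c : ℤ) = j₂ + j₃ - j₁) {y : ℕ × ℕ × ℕ}
    (hy : y ∈ range (a + 1) ×ˢ range (b + 1) ×ˢ range (c + 1)) (z₁ z₂ z₃ : ℂ) (ρ : ℝ) :
    networkTerm j₁ j₂ j₃ z₁ z₂ z₃ ρ (labelsOfExponents j₁ j₃ y) =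
      wC j₁ j₂ j₃ * Real.exp (ρ * (j₁ + j₂ + j₃)) *
        (z₁ ^ y.1 * (-z₂) ^ (a - y.1) * (a.choose y.1 : ℂ) *
          (z₁ ^ y.2.1 * (-z₃) ^ (b - y.2.1) * (b.choose y.2.1 : ℂ)) *
          (z₂ ^ y.2.2 * (-z₃) ^ (c - y.2.2) * (c.choose y.2.2 : ℂ))) := by
  obtain ⟨p, q, r⟩ := y
  simp only [mem_product, mem_range] at hy
  have h := wIsummand_mul_wilson (j₁ := j₁) (j₂ := j₂) (j₃ := j₃) (p' := a - p) (q' := b - q)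
    (r' := c - r) (q := q) (r := r) (m₁ := (p : ℤ) + q - j₁) (m₂ := (j₃ : ℤ) - j₁ + p - r)
    (m₃ := (q : ℤ) + r - j₃) (k := p)
    (by omega) rfl (by omega) (by omega) (by omega) (by omega) (by omega) z₁ z₂ z₃ ρ
  rwa [Nat.add_sub_cancel' (by omega), Nat.add_sub_cancel' (by omega),
    Nat.add_sub_cancel' (by omega)] at h

theorem stmt_13_general (j₁ j₂ j₃ : ℕ)
    (htri : |(j₁ : ℤ) - j₂| ≤ (j₃ : ℤ) ∧ (j₃ : ℤ) ≤ j₁ + j₂)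
    (z₁ z₂ z₃ : ℂ) (ρ : ℝ) :
    ∑ m₁ ∈ Finset.Icc (-(j₁ : ℤ)) (j₁ : ℤ),
      ∑ m₂ ∈ Finset.Icc (-(j₂ : ℤ)) (j₂ : ℤ),
        ∑ m₃ ∈ Finset.Icc (-(j₃ : ℤ)) (j₃ : ℤ),
          (wI j₁ j₂ j₃ m₁ m₂ m₃ : ℂ) *
            ((-1 : ℂ) ^ ((j₁ : ℤ) + m₁) * (wA j₁ m₁ : ℂ) * z₁ ^ ((j₁ : ℤ) + m₁) *
              (Real.exp (ρ * j₁) : ℂ)) *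
            ((wA j₂ m₂ : ℂ) * z₂ ^ ((j₂ : ℤ) - m₂) * (Real.exp (ρ * j₂) : ℂ)) *
            ((wA j₃ m₃ : ℂ) * z₃ ^ ((j₃ : ℤ) - m₃) * (Real.exp (ρ * j₃) : ℂ)) =
      (wC j₁ j₂ j₃ : ℂ) * (Real.exp (ρ * ((j₁ : ℝ) + j₂ + j₃)) : ℂ) *
        (z₁ - z₂) ^ ((j₁ : ℤ) + j₂ - j₃) * (z₁ - z₃) ^ ((j₁ : ℤ) + j₃ - j₂) *
        (z₂ - z₃) ^ ((j₂ : ℤ) + j₃ - j₁) := by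
  obtain ⟨hj₁₂, hj₃⟩ := htri
  rw [abs_le] at hj₁₂
  lift (j₁ : ℤ) + j₂ - j₃ to ℕ using (by omega) with a ha
  lift (j₁ : ℤ) + j₃ - j₂ to ℕ using (by omega) with b hb
  lift (j₂ : ℤ) + j₃ - j₁ to ℕ using (by omega) with c hc
  calc _ = ∑ x ∈ networkLabels j₁ j₂ j₃, networkTerm j₁ j₂ j₃ z₁ z₂ z₃ ρ x :=
        sum_wI_mul_eq_sum_networkLabels j₁ j₂ j₃ _ _ _
    _ = ∑ y ∈ range (a + 1) ×ˢ range (b + 1) ×ˢ range (c + 1),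
        networkTerm j₁ j₂ j₃ z₁ z₂ z₃ ρ (labelsOfExponents j₁ j₃ y) :=
        sum_networkLabels_eq ha hb hc _
    _ = _ := by
        rw [sum_congr rfl fun y hy => networkTerm_labelsOfExponents ha hb hc hy z₁ z₂ z₃ ρ,
          ← mul_sum, ← sub_pow_mul_sub_pow_mul_sub_pow]
        simp only [zpow_natCast, mul_assoc]

/-- The 3-point AdS vertex function: the contracted Wilson network with
lowest/highest-weight cap states reproduces the 3-point conformal correlator. -/
theorem stmt_13 (j₁ j₂ j₃ : ℕ)
    (htri : |(j₁ : ℤ) - j₂| ≤ (j₃ : ℤ) ∧ (j₃ : ℤ) ≤ j₁ + j₂)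
    (z₁ z₂ z₃ : ℂ) (h12 : z₁ ≠ z₂) (h13 : z₁ ≠ z₃) (h23 : z₂ ≠ z₃) (ρ : ℝ) :
    ∑ m₁ ∈ Finset.Icc (-(j₁ : ℤ)) (j₁ : ℤ),
      ∑ m₂ ∈ Finset.Icc (-(j₂ : ℤ)) (j₂ : ℤ),
        ∑ m₃ ∈ Finset.Icc (-(j₃ : ℤ)) (j₃ : ℤ),
          (wI j₁ j₂ j₃ m₁ m₂ m₃ : ℂ) *
            ((-1 : ℂ) ^ ((j₁ : ℤ) + m₁) * (wA j₁ m₁ : ℂ) * z₁ ^ ((j₁ : ℤ) + m₁) *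
              (Real.exp (ρ * j₁) : ℂ)) *
            ((wA j₂ m₂ : ℂ) * z₂ ^ ((j₂ : ℤ) - m₂) * (Real.exp (ρ * j₂) : ℂ)) *
            ((wA j₃ m₃ : ℂ) * z₃ ^ ((j₃ : ℤ) - m₃) * (Real.exp (ρ * j₃) : ℂ)) =
      (wC j₁ j₂ j₃ : ℂ) * (Real.exp (ρ * ((j₁ : ℝ) + j₂ + j₃)) : ℂ) *
        (z₁ - z₂) ^ ((j₁ : ℤ) + j₂ - j₃) * (z₁ - z₃) ^ ((j₁ : ℤ) + j₃ - j₂) *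
        (z₂ - z₃) ^ ((j₂ : ℤ) + j₃ - j₁) :=
  stmt_13_general j₁ j₂ j₃ htri z₁ z₂ z₃ ρ
end

section
/- Let V be a finite-dimensional real normed vector space and let J₋₁, J₀, J₁ be linear endomorphisms of V satisfying the sl(2) commutation relations [J₀, J₁] = −J₁, [J₀, J₋₁] = J₋₁, and [J₁, J₋₁] = 2J₀. Let a ∈ V and define F : ℝ × ℝ → V by F(ρ, z) := exp(z·J₁)(exp(ρ·J₀) a). Then: (i) ∂_z F = J₁ F and ∂_ρ F − z·∂_z F = J₀ F (for any a); and (ii) if moreover (J₁ + J₋₁) a = 0, then z²·∂_z F − 2z·∂_ρ F − e^{−2ρ}·∂_z F = J₋₁ F. -/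
/-!
Everything reduces to conjugation formulas for the one-parameter groups `exp (t • J₀)` and
`exp (t • J₁)`. Since `ad J₀` acts on `J₁` and `J₋₁` by the scalars `∓1`, conjugation by
`exp (ρ • J₀)` rescales them by `e^{∓ρ}`; since `ad J₁` is nilpotent on `J₀` and `J₋₁`,
conjugation by `exp (z • J₁)` produces polynomials in `z`. Each formula is obtained by checking
that both sides solve the same linear ODE `G' = X G` (or `G' = G X`) in a Banach algebra. With the
cap condition `J₋₁ a = -J₁ a`, the formula for `J₋₁ F` becomes the stated combination of
`∂_z F = J₁ F` and `∂_ρ F = J₀ F + z J₁ F`.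
-/

open NormedSpace

section BanachAlgebra

variable {A : Type*} [NormedRing A] [NormedAlgebra ℝ A] [CompleteSpace A]

lemma exp_add_of_commute_real {X Y : A} (h : Commute X Y) : exp (X + Y) = exp X * exp Y :=
  exp_add_of_commute_of_mem_ball (𝕂 := ℝ) h
    ((expSeries_radius_eq_top ℝ A).symm ▸ edist_lt_top _ _)
    ((expSeries_radius_eq_top ℝ A).symm ▸ edist_lt_top _ _)

lemma eq_exp_smul_mul_of_hasDerivAt {X : A} {G : ℝ → A}
    (hG : ∀ t, HasDerivAt G (X * G t) t) (t : ℝ) : G t = exp (t • X) * G 0 := by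
  have hconst : ∀ s, HasDerivAt (fun s : ℝ => exp (s • -X) * G s) 0 s := fun s => by
    refine ((hasDerivAt_exp_smul_const (-X) s).mul (hG s)).congr_deriv ?_
    noncomm_ring
  have h := is_const_of_deriv_eq_zero (fun s => (hconst s).differentiableAt)
    (fun s => (hconst s).deriv) t 0
  rw [zero_smul, exp_zero, one_mul, smul_neg] at h
  rw [← h, ← mul_assoc, ← exp_add_of_commute_real (Commute.refl _).neg_right, add_neg_cancel,
    exp_zero, one_mul]

lemma eq_mul_exp_smul_of_hasDerivAt {X : A} {G : ℝ → A}
    (hG : ∀ t, HasDerivAt G (G t * X) t) (t : ℝ) : G t = G 0 * exp (t • X) := by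
  have hconst : ∀ s, HasDerivAt (fun s : ℝ => G s * exp (s • -X)) 0 s := fun s => by
    refine ((hG s).mul (hasDerivAt_exp_smul_const' (-X) s)).congr_deriv ?_
    noncomm_ring
  have h := is_const_of_deriv_eq_zero (fun s => (hconst s).differentiableAt)
    (fun s => (hconst s).deriv) t 0
  rw [zero_smul, exp_zero, mul_one, smul_neg] at h
  rw [← h, mul_assoc, ← exp_add_of_commute_real (Commute.refl _).neg_left, neg_add_cancel,
    exp_zero, mul_one]

lemma exp_smul_mul_eq_smul_mul_exp_smul {X Y : A} {c : ℝ} (h : X * Y - Y * X = c • Y) (t : ℝ) :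
    exp (t • X) * Y = Real.exp (c * t) • (Y * exp (t • X)) := by
  have hG : ∀ s, HasDerivAt (fun s => Real.exp (c * s) • (Y * exp (s • X)))
      (X * (Real.exp (c * s) • (Y * exp (s • X)))) s := fun s => by
    refine (((hasDerivAt_id s).const_mul c).exp.smul
      ((hasDerivAt_exp_smul_const' X s).const_mul Y)).congr_deriv ?_
    simp only [id, mul_one, mul_smul_comm, ← mul_assoc, eq_add_of_sub_eq h, add_mul,
      smul_mul_assoc, smul_add, smul_smul]
    module
  simpa using (eq_exp_smul_mul_of_hasDerivAt hG t).symm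

lemma exp_smul_mul_eq_add_smul_mul_exp_smul {X Y Z : A} (h : X * Y - Y * X = Z)
    (hZ : Commute X Z) (t : ℝ) : exp (t • X) * Y = (Y + t • Z) * exp (t • X) := by
  have hG : ∀ s, HasDerivAt (fun s : ℝ => (Y + s • Z) * exp (s • X))
      (X * ((Y + s • Z) * exp (s • X))) s := fun s => by
    refine ((((hasDerivAt_id s).smul_const Z).const_add Y).mul
      (hasDerivAt_exp_smul_const' X s)).congr_deriv ?_
    rw [← mul_assoc, ← mul_assoc, mul_add X, eq_add_of_sub_eq h, mul_smul_comm, hZ.eq]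
    simp only [id, one_smul, add_mul, smul_mul_assoc]
    abel
  simpa using (eq_exp_smul_mul_of_hasDerivAt hG t).symm

lemma mul_exp_smul_eq_exp_smul_mul_add {X Y B C : A} (hB : Y * X - X * Y = B)
    (hC : B * X - X * B = C) (hCX : Commute C X) (t : ℝ) :
    Y * exp (t • X) = exp (t • X) * (Y + t • B + (t ^ 2 / 2) • C) := by
  have hQ : ∀ s : ℝ, HasDerivAt (fun s : ℝ => Y + s • B + (s ^ 2 / 2) • C) (B + s • C) s :=
    fun s => by
      refine ((((hasDerivAt_id s).smul_const B).const_add Y).add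
        (((hasDerivAt_pow 2 s).div_const 2).smul_const C)).congr_deriv ?_
      simp only [one_smul]
      congr 2
      ring
  have hG : ∀ s, HasDerivAt (fun s : ℝ => exp (s • X) * (Y + s • B + (s ^ 2 / 2) • C))
      (exp (s • X) * (Y + s • B + (s ^ 2 / 2) • C) * X) s := fun s => by
    refine ((hasDerivAt_exp_smul_const X s).mul (hQ s)).congr_deriv ?_
    rw [mul_assoc, mul_assoc, ← mul_add]
    congr 1
    rw [add_mul, add_mul, smul_mul_assoc, smul_mul_assoc, eq_add_of_sub_eq hB,
      eq_add_of_sub_eq hC, hCX.eq]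
    simp only [mul_add, mul_smul_comm, smul_add]
    abel
  simpa using (eq_mul_exp_smul_of_hasDerivAt hG t).symm

end BanachAlgebra

section sl2

variable {V : Type*} [NormedAddCommGroup V] [NormedSpace ℝ V] [CompleteSpace V]

/-- The paper's Wilson-line transported cap state `W_j[x,0]|a⟩` at `x = (ρ, z)`. -/
noncomputable def capState (J0 J1 : V →L[ℝ] V) (a : V) (ρ z : ℝ) : V :=
  exp (z • J1) (exp (ρ • J0) a)

variable {Jm J0 J1 : V →L[ℝ] V}

lemma hasDerivAt_exp_smul_apply (X : V →L[ℝ] V) (v : V) (t : ℝ) :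
    HasDerivAt (fun s : ℝ => exp (s • X) v) (X (exp (t • X) v)) t :=
  ((hasDerivAt_exp_smul_const' X t).clm_apply (hasDerivAt_const t v)).congr_deriv (by simp)

lemma exp_smul_J1_apply_J0 (h01 : J0 * J1 - J1 * J0 = -J1) (z : ℝ) (v : V) :
    exp (z • J1) (J0 v) = J0 (exp (z • J1) v) + z • J1 (exp (z • J1) v) := by
  have h : J1 * J0 - J0 * J1 = J1 := by rw [← neg_sub, h01, neg_neg]
  simpa using congr($(exp_smul_mul_eq_add_smul_mul_exp_smul h (Commute.refl J1) z) v)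

lemma Jm_apply_exp_smul_J1 (h01 : J0 * J1 - J1 * J0 = -J1)
    (h1m : J1 * Jm - Jm * J1 = (2 : ℝ) • J0) (z : ℝ) (v : V) :
    Jm (exp (z • J1) v) = exp (z • J1) (Jm v - (2 * z) • J0 v + z ^ 2 • J1 v) := by
  have hB : Jm * J1 - J1 * Jm = -((2 : ℝ) • J0) := by rw [← neg_sub, h1m]
  have hC : -((2 : ℝ) • J0) * J1 - J1 * -((2 : ℝ) • J0) = (2 : ℝ) • J1 := by
    rw [neg_mul, mul_neg, smul_mul_assoc, mul_smul_comm, neg_sub_neg, ← smul_sub, ← neg_sub,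
      h01, neg_neg]
  have h := DFunLike.congr_fun
    (mul_exp_smul_eq_exp_smul_mul_add hB hC ((Commute.refl J1).smul_left 2) z) v
  simp only [mul_apply_eq_comp, add_apply, smul_apply, neg_apply, smul_smul] at h
  rw [h]
  congr 1
  module

lemma Jm_apply_exp_smul_J0_of_cap (h01 : J0 * J1 - J1 * J0 = -J1)
    (h0m : J0 * Jm - Jm * J0 = Jm) {a : V} (hcap : (J1 + Jm) a = 0) (ρ : ℝ) :
    Jm (exp (ρ • J0) a) = -(Real.exp (-2 * ρ) • J1 (exp (ρ • J0) a)) := by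
  have hJ1 : exp (ρ • J0) (J1 a) = Real.exp (-ρ) • J1 (exp (ρ • J0) a) := by
    have h := exp_smul_mul_eq_smul_mul_exp_smul
      (show J0 * J1 - J1 * J0 = (-1 : ℝ) • J1 by rw [h01, neg_one_smul]) ρ
    simpa using congr($h a)
  have hJm : exp (ρ • J0) (Jm a) = Real.exp ρ • Jm (exp (ρ • J0) a) := by
    have h := exp_smul_mul_eq_smul_mul_exp_smul
      (show J0 * Jm - Jm * J0 = (1 : ℝ) • Jm by rw [h0m, one_smul]) ρ
    simpa using congr($h a)
  have ha : Jm a = -J1 a := eq_neg_of_add_eq_zero_right hcap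
  calc Jm (exp (ρ • J0) a) = Real.exp (-ρ) • Real.exp ρ • Jm (exp (ρ • J0) a) := by
        rw [smul_smul, ← Real.exp_add, neg_add_cancel, Real.exp_zero, one_smul]
    _ = -(Real.exp (-ρ) • Real.exp (-ρ) • J1 (exp (ρ • J0) a)) := by
        rw [← hJm, ha, map_neg, hJ1, smul_neg]
    _ = -(Real.exp (-2 * ρ) • J1 (exp (ρ • J0) a)) := by
        rw [smul_smul, ← Real.exp_add]
        ring_nf

lemma hasDerivAt_capState_z (a : V) (ρ z : ℝ) :
    HasDerivAt (capState J0 J1 a ρ) (J1 (capState J0 J1 a ρ z)) z :=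
  hasDerivAt_exp_smul_apply J1 _ z

lemma hasDerivAt_capState_rho (h01 : J0 * J1 - J1 * J0 = -J1) (a : V) (ρ z : ℝ) :
    HasDerivAt (fun r => capState J0 J1 a r z)
      (J0 (capState J0 J1 a ρ z) + z • J1 (capState J0 J1 a ρ z)) ρ := by
  refine ((exp (z • J1)).hasFDerivAt.comp_hasDerivAt ρ
    (hasDerivAt_exp_smul_apply J0 a ρ)).congr_deriv ?_
  exact exp_smul_J1_apply_J0 h01 z _

lemma Jm_apply_capState (h01 : J0 * J1 - J1 * J0 = -J1) (h0m : J0 * Jm - Jm * J0 = Jm)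
    (h1m : J1 * Jm - Jm * J1 = (2 : ℝ) • J0) {a : V} (hcap : (J1 + Jm) a = 0) (ρ z : ℝ) :
    Jm (capState J0 J1 a ρ z) = z ^ 2 • J1 (capState J0 J1 a ρ z)
      - (2 * z) • (J0 (capState J0 J1 a ρ z) + z • J1 (capState J0 J1 a ρ z))
      - Real.exp (-2 * ρ) • J1 (capState J0 J1 a ρ z) := by
  have hcomm : Commute (exp (z • J1)) J1 := ((Commute.refl J1).smul_left z).exp_left
  have hcomm_apply : ∀ v, exp (z • J1) (J1 v) = J1 (exp (z • J1) v) := fun v =>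
    congr($hcomm.eq v)
  simp only [capState]
  rw [Jm_apply_exp_smul_J1 h01 h1m, map_add, map_sub, map_smul, map_smul,
    Jm_apply_exp_smul_J0_of_cap h01 h0m hcap, map_neg, map_smul, hcomm_apply,
    exp_smul_J1_apply_J0 h01]
  module

end sl2

/-- The bulk cap-state computation: for `F (ρ, z) = exp (z • J₁) (exp (ρ • J₀) a)` one has
`∂_z F = J₁ F` and `∂_ρ F - z ∂_z F = J₀ F`; if moreover `(J₁ + J₋₁) a = 0`, then
`z² ∂_z F - 2z ∂_ρ F - e^{-2ρ} ∂_z F = J₋₁ F`. -/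
theorem stmt_17 (V : Type*) [NormedAddCommGroup V] [NormedSpace ℝ V]
    [FiniteDimensional ℝ V]
    (Jm J0 J1 : V →L[ℝ] V)
    (h01 : J0 * J1 - J1 * J0 = -J1)
    (h0m : J0 * Jm - Jm * J0 = Jm)
    (h1m : J1 * Jm - Jm * J1 = (2 : ℝ) • J0)
    (a : V) (F : ℝ → ℝ → V)
    (hF : ∀ ρ z : ℝ, F ρ z = NormedSpace.exp (z • J1) (NormedSpace.exp (ρ • J0) a)) :
    ((∀ ρ z : ℝ, HasDerivAt (fun w => F ρ w) (J1 (F ρ z)) z) ∧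
      (∀ ρ z : ℝ, deriv (fun r => F r z) ρ - z • deriv (fun w => F ρ w) z = J0 (F ρ z))) ∧
    ((J1 + Jm) a = 0 →
      ∀ ρ z : ℝ,
        z ^ 2 • deriv (fun w => F ρ w) z - (2 * z) • deriv (fun r => F r z) ρ -
            Real.exp (-2 * ρ) • deriv (fun w => F ρ w) z = Jm (F ρ z)) := by
  obtain rfl : F = capState J0 J1 a := funext₂ hF
  have hz := hasDerivAt_capState_z (J0 := J0) (J1 := J1) a
  have hρ := hasDerivAt_capState_rho h01 a
  refine ⟨⟨hz, fun ρ z => ?_⟩, fun hcap ρ z => ?_⟩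
  · rw [(hz ρ z).deriv, (hρ ρ z).deriv, add_sub_cancel_right]
  · rw [(hz ρ z).deriv, (hρ ρ z).deriv, Jm_apply_capState h01 h0m h1m hcap]
end
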